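/- arXiv:2501.12865 — 10 statements merged into one kernel-verified Lean document; each statement's English description precedes it below -/
import Mathlib

section
/- Let $p$ be a real number with $2 < p < 4$, let $a, c > 0$ and $b, d \ge 0$ be real numbers, and assume $b d^2 < \frac{p-2}{4-p}\left(\frac{4-p}{2}\right)^{2/(p-2)} a \left(\frac{c}{a}\right)^{2/(p-2)}$. Then there exists a unique $t > 0$ such that $t^2 a + b t^4 d^2 = t^p c$ and $(4-p) t^p c < 2 t^2 a$; moreover this $t$ satisfies $t < \left(\frac{2a}{(4-p)c}\right)^{1/(p-2)}$. -/
/-- Bernoulli-type inequality: for `0 < q ≤ 2` and `0 < x < y`,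
`(q/2) * y^q * (y^2 - x^2) ≤ (y^q - x^q) * y^2`. -/
lemma bern_aux (q : ℝ) (hq0 : 0 < q) (hq2 : q ≤ 2) (x y : ℝ) (hx : 0 < x) (hxy : x < y) :
    (q / 2) * y ^ q * (y ^ 2 - x ^ 2) ≤ (y ^ q - x ^ q) * y ^ 2 := by
  have hy : 0 < y := hx.trans hxy
  have hu : (0:ℝ) < x ^ 2 / y ^ 2 := by positivity
  have hb := rpow_one_add_le_one_add_mul_self (s := x ^ 2 / y ^ 2 - 1)
    (by linarith) (p := q / 2) (by linarith) (by linarith)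
  rw [show (1:ℝ) + (x ^ 2 / y ^ 2 - 1) = x ^ 2 / y ^ 2 by ring] at hb
  have he : (x ^ 2 / y ^ 2 : ℝ) ^ (q / 2) = x ^ q / y ^ q := by
    rw [← div_pow, ← Real.rpow_two (x / y), ← Real.rpow_mul (by positivity),
      show (2:ℝ) * (q / 2) = q by ring, Real.div_rpow hx.le hy.le]
  rw [he] at hb
  have hyq : 0 < y ^ q := Real.rpow_pos_of_pos hy q
  have hb' := mul_le_mul_of_nonneg_right hb (by positivity : (0:ℝ) ≤ y ^ q * y ^ 2)
  have e1 : x ^ q / y ^ q * (y ^ q * y ^ 2) = x ^ q * y ^ 2 := by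
    field_simp
  have e2 : (1 + q / 2 * (x ^ 2 / y ^ 2 - 1)) * (y ^ q * y ^ 2)
      = y ^ q * y ^ 2 + q / 2 * (x ^ 2 - y ^ 2) * y ^ q := by
    field_simp
  rw [e1, e2] at hb'
  linarith [hb']

/-- For `2 < p < 4`, `a, c > 0`, `b, d ≥ 0` with
`b d² < ((p-2)/(4-p)) ((4-p)/2)^(2/(p-2)) a (c/a)^(2/(p-2))`, there is a unique
`t > 0` with `t² a + b t⁴ d² = t^p c` and `(4-p) t^p c < 2 t² a`; moreover this
`t` satisfies `t < (2a/((4-p)c))^(1/(p-2))`. -/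
theorem stmt_1 (p a b c d : ℝ) (hp2 : 2 < p) (hp4 : p < 4) (ha : 0 < a) (hc : 0 < c)
    (hb : 0 ≤ b) (hd : 0 ≤ d)
    (hbd : b * d ^ 2 <
      (p - 2) / (4 - p) * ((4 - p) / 2) ^ (2 / (p - 2)) * a * (c / a) ^ (2 / (p - 2))) :
    (∃! t : ℝ, 0 < t ∧ t ^ 2 * a + b * t ^ 4 * d ^ 2 = t ^ p * c ∧
        (4 - p) * (t ^ p * c) < 2 * (t ^ 2 * a)) ∧
      ∀ t : ℝ, 0 < t → t ^ 2 * a + b * t ^ 4 * d ^ 2 = t ^ p * c →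
        (4 - p) * (t ^ p * c) < 2 * (t ^ 2 * a) →
        t < (2 * a / ((4 - p) * c)) ^ (1 / (p - 2)) := by
  set q : ℝ := p - 2 with hqdef
  have hq0 : 0 < q := by simp [hqdef]; linarith
  have hq2 : q < 2 := by simp [hqdef]; linarith
  have h4p : 0 < 4 - p := by linarith
  set X : ℝ := 2 * a / ((4 - p) * c) with hXdef
  have hX0 : 0 < X := by positivity
  set T : ℝ := X ^ (1 / q) with hTdef
  have hT0 : 0 < T := Real.rpow_pos_of_pos hX0 _
  have hTq : T ^ q = X := by
    rw [hTdef, ← Real.rpow_mul hX0.le, one_div_mul_cancel hq0.ne', Real.rpow_one]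
  clear_value q X T
  -- rewrite t^p as t^q * t^2
  have hpow : ∀ t : ℝ, 0 < t → t ^ p = t ^ q * t ^ 2 := by
    intro t ht
    rw [show p = q + 2 by simp [hqdef], Real.rpow_add ht, Real.rpow_two]
  -- the equation in divided form
  have hdiv : ∀ t : ℝ, 0 < t →
      (t ^ 2 * a + b * t ^ 4 * d ^ 2 = t ^ p * c ↔ a + b * d ^ 2 * t ^ 2 = c * t ^ q) := by
    intro t ht
    rw [hpow t ht, show t ^ 2 * a + b * t ^ 4 * d ^ 2 = t ^ 2 * (a + b * d ^ 2 * t ^ 2) by ring,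
      show t ^ q * t ^ 2 * c = t ^ 2 * (c * t ^ q) by ring,
      mul_right_inj' (pow_ne_zero 2 ht.ne')]
  -- the constraint in divided form
  have hcon : ∀ t : ℝ, 0 < t →
      ((4 - p) * (t ^ p * c) < 2 * (t ^ 2 * a) ↔ (4 - p) * (c * t ^ q) < 2 * a) := by
    intro t ht
    rw [hpow t ht, show (4 - p) * (t ^ q * t ^ 2 * c) = t ^ 2 * ((4 - p) * (c * t ^ q)) by ring,
      show 2 * (t ^ 2 * a) = t ^ 2 * (2 * a) by ring, mul_lt_mul_iff_right₀ (pow_pos ht 2)]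
  -- the constraint is equivalent to t < T
  have hconT : ∀ t : ℝ, 0 < t → ((4 - p) * (c * t ^ q) < 2 * a ↔ t < T) := by
    intro t ht
    rw [← Real.rpow_lt_rpow_iff ht.le hT0.le hq0, hTq, hXdef,
      lt_div_iff₀ (by positivity : (0:ℝ) < (4 - p) * c)]
    constructor <;> intro h <;> nlinarith [h]
  -- key bound from hbd : b * d^2 * T^2 < q / (4 - p) * a
  have hbdT : b * d ^ 2 * T ^ 2 < q / (4 - p) * a := by
    have hT2 : T ^ 2 = X ^ (2 / q) := by
      rw [hTdef, ← Real.rpow_two, ← Real.rpow_mul hX0.le,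
        show 1 / q * 2 = 2 / q by ring]
    have hprod : ((4 - p) / 2) ^ (2 / q) * ((c / a) ^ (2 / q) * X ^ (2 / q))
        = (1:ℝ) := by
      rw [← Real.mul_rpow (by positivity) hX0.le,
        ← Real.mul_rpow (by positivity) (by positivity),
        show (4 - p) / 2 * (c / a * X) = 1 by
          rw [hXdef]; field_simp,
        Real.one_rpow]
    have h1 := mul_lt_mul_of_pos_right hbd (by positivity : (0:ℝ) < X ^ (2 / q))
    calc b * d ^ 2 * T ^ 2 = b * d ^ 2 * X ^ (2 / q) := by rw [hT2]
      _ < q / (4 - p) * ((4 - p) / 2) ^ (2 / q) * a * (c / a) ^ (2 / q) * X ^ (2 / q) := h1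
      _ = q / (4 - p) * a * (((4 - p) / 2) ^ (2 / q) * ((c / a) ^ (2 / q) * X ^ (2 / q))) := by
          ring
      _ = q / (4 - p) * a := by rw [hprod, mul_one]
  -- uniqueness core
  have huniq : ∀ t₁ t₂ : ℝ, 0 < t₁ → t₁ < t₂ →
      a + b * d ^ 2 * t₁ ^ 2 = c * t₁ ^ q → a + b * d ^ 2 * t₂ ^ 2 = c * t₂ ^ q →
      (4 - p) * (c * t₂ ^ q) < 2 * a → False := by
    intro t₁ t₂ ht₁ ht₁₂ he1 he2 hcon2
    have ht₂ : 0 < t₂ := ht₁.trans ht₁₂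
    have hber := bern_aux q hq0 hq2.le t₁ t₂ ht₁ ht₁₂
    have ht1q : 0 < t₁ ^ q := Real.rpow_pos_of_pos ht₁ q
    have ht2q : 0 < t₂ ^ q := Real.rpow_pos_of_pos ht₂ q
    have hts : t₁ ^ 2 < t₂ ^ 2 := by nlinarith
    -- from hcon2 : 2 * b * d^2 * t₂^2 < q * (c * t₂^q)
    have h2q : (4 - p) = 2 - q := by rw [hqdef]; ring
    rw [h2q] at hcon2
    have h3 : 2 * (b * d ^ 2 * t₂ ^ 2) < q * (c * t₂ ^ q) := by linarith [hcon2, he2]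
    -- subtracting the equations : c * (t₂^q - t₁^q) = b*d^2*(t₂^2 - t₁^2)
    have h4 : c * (t₂ ^ q - t₁ ^ q) = b * d ^ 2 * (t₂ ^ 2 - t₁ ^ 2) := by linarith
    have h5 := mul_le_mul_of_nonneg_left hber hc.le
    have h6 := mul_lt_mul_of_pos_right h3 (sub_pos.2 hts)
    have h7 : c * ((t₂ ^ q - t₁ ^ q) * t₂ ^ 2) = b * d ^ 2 * (t₂ ^ 2 - t₁ ^ 2) * t₂ ^ 2 := by
      linear_combination t₂ ^ 2 * h4
    linarith [h5, h6, h7]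
  -- existence via IVT
  have hcont : Continuous fun t : ℝ => c * t ^ q - b * d ^ 2 * t ^ 2 := by
    exact (continuous_const.mul (Real.continuous_rpow_const hq0.le)).sub
      (continuous_const.mul (continuous_pow 2))
  have hg0 : c * (0:ℝ) ^ q - b * d ^ 2 * (0:ℝ) ^ 2 = 0 := by
    rw [Real.zero_rpow hq0.ne']; ring
  have hgT : a < c * T ^ q - b * d ^ 2 * T ^ 2 := by
    have hcX : c * X = 2 * a / (4 - p) := by rw [hXdef]; field_simp
    have h2 : 2 * a / (4 - p) - q / (4 - p) * a = a := by field_simp [hqdef]; linarith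
    rw [hTq, hcX]
    linarith [hbdT]
  obtain ⟨t, ⟨ht0, htT⟩, hgt⟩ :=
    intermediate_value_Ioo hT0.le hcont.continuousOn
      (by rw [hg0]; exact ⟨ha, hgT⟩ : a ∈ Set.Ioo (c * (0:ℝ) ^ q - b * d ^ 2 * (0:ℝ) ^ 2)
        (c * T ^ q - b * d ^ 2 * T ^ 2))
  have heqt : a + b * d ^ 2 * t ^ 2 = c * t ^ q := by dsimp at hgt; linarith
  have hcont_t : (4 - p) * (c * t ^ q) < 2 * a := (hconT t ht0).2 htT
  constructor
  · refine ⟨t, ⟨ht0, (hdiv t ht0).2 heqt, (hcon t ht0).2 hcont_t⟩, ?_⟩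
    rintro y ⟨hy0, hye, hyc⟩
    have hye' := (hdiv y hy0).1 hye
    have hyc' := (hcon y hy0).1 hyc
    rcases lt_trichotomy y t with h | h | h
    · exact absurd (huniq y t hy0 h hye' heqt hcont_t) not_false
    · exact h
    · exact absurd (huniq t y ht0 h heqt hye' hyc') not_false
  · intro s hs0 hse hsc
    exact (hconT s hs0).1 ((hcon s hs0).1 hsc)
end

section
/- Let $p$ be a real number with $2 < p < 4$, let $k \ge 0$ be an integer, and let $S > 0$. Set $\widehat{b} := \frac{p-2}{4-p}\left(1 + k\, 2^{p/(p-2)}\left(\frac{2}{4-p}\right)^{2/(p-2)}\right)^{-1}\left(\frac{4-p}{2}\right)^{2/(p-2)}(2S)^{-p/(p-2)}$ and $b_* := \min\left\{\frac{p-2}{4-p}\left(\frac{4-p}{2}\right)^{2/(p-2)}(2S)^{-p/(p-2)},\ \widehat{b}\right\}$. Suppose for each $i \in \{1, \dots, k+1\}$ we are given real numbers $a_i > 0$, $c_i > 0$, and $d_i \in [0, a_i]$ satisfying $c_i \le S^{-p/2} a_i^{p/2}$ and $c_i^{2/p} \ge (2S)^{-1} a_i$. Then for every $b \in (0, b_*)$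 there exists a unique $(k+1)$-tuple $(t_1, \dots, t_{k+1})$ of positive real numbers such that for each $i$: $t_i^2 a_i + b t_i^4 d_i^2 + b t_i^2 d_i \sum_{j \ne i} t_j^2 d_j = t_i^p c_i$ and $(4-p) t_i^p c_i < 2 t_i^2 a_i$. -/
/-- For `1 ≤ q` and `0 ≤ y ≤ x`, `x^q - y^q ≤ q * x^(q-1) * (x-y)`. -/
lemma aux_div_le_div {x y c : ℝ} (h : x ≤ y) (hc : 0 < c) : x / c ≤ y / c := by
  gcongr

/-- For `1 ≤ q` and `0 ≤ y ≤ x`, `x^q - y^q ≤ q * x^(q-1) * (x-y)`. -/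
lemma aux_rpow_sub_le {q : ℝ} (hq : 1 ≤ q) {x y : ℝ} (hy : 0 ≤ y) (hxy : y ≤ x) :
    x ^ q - y ^ q ≤ q * x ^ (q - 1) * (x - y) := by
  rcases eq_or_lt_of_le hxy with h | h
  · rw [h]; simp
  · have hx : (0:ℝ) ≤ x := le_trans hy hxy
    obtain ⟨cc, hcc, hslope⟩ := exists_hasDerivAt_eq_slope (fun z => z ^ q)
      (fun z => q * z ^ (q - 1)) h
      (fun z _ => (Real.hasDerivAt_rpow_const (Or.inr hq)).continuousAt.continuousWithinAt)
      (fun z _ => Real.hasDerivAt_rpow_const (Or.inr hq))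
    have hc0 : 0 ≤ cc := le_trans hy hcc.1.le
    have hcx : cc ≤ x := hcc.2.le
    have hmono : cc ^ (q - 1) ≤ x ^ (q - 1) :=
      Real.rpow_le_rpow hc0 hcx (by linarith)
    have hxy' : x - y ≠ 0 := sub_ne_zero.mpr (ne_of_gt h)
    rw [eq_div_iff hxy'] at hslope
    rw [← hslope]
    have hq0 : 0 < q := by linarith
    apply mul_le_mul_of_nonneg_right _ (by linarith : (0:ℝ) ≤ x - y)
    exact mul_le_mul_of_nonneg_left hmono hq0.le

set_option maxHeartbeats 2000000 in
/-- scalar form of Lemma 2.1. For `2 < p < 4`, `k ≥ 0`, `S > 0`, with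
`b̂` and `b_*` as defined, and data `aᵢ > 0`, `cᵢ > 0`, `dᵢ ∈ [0, aᵢ]` satisfying
`cᵢ ≤ S^(-p/2) aᵢ^(p/2)` and `cᵢ^(2/p) ≥ (2S)⁻¹ aᵢ`, for every `b ∈ (0, b_*)` there
is a unique positive `(k+1)`-tuple `(t₁,…,t_{k+1})` solving the Nehari system with
the strict `N_k⁻` constraints. -/
theorem stmt_2 (p : ℝ) (hp2 : 2 < p) (hp4 : p < 4) (k : ℕ) (S : ℝ) (hS : 0 < S)
    (bhat bstar : ℝ)
    (hbhat : bhat = (p - 2) / (4 - p) *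
        (1 + (k : ℝ) * 2 ^ (p / (p - 2)) * (2 / (4 - p)) ^ (2 / (p - 2)))⁻¹ *
        ((4 - p) / 2) ^ (2 / (p - 2)) * (2 * S) ^ (-(p / (p - 2))))
    (hbstar : bstar =
        min ((p - 2) / (4 - p) * ((4 - p) / 2) ^ (2 / (p - 2)) * (2 * S) ^ (-(p / (p - 2))))
          bhat)
    (a c d : Fin (k + 1) → ℝ)
    (ha : ∀ i, 0 < a i) (hc : ∀ i, 0 < c i) (hd : ∀ i, d i ∈ Set.Icc 0 (a i))
    (hc1 : ∀ i, c i ≤ S ^ (-(p / 2)) * a i ^ (p / 2))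
    (hc2 : ∀ i, (2 * S)⁻¹ * a i ≤ c i ^ (2 / p))
    (b : ℝ) (hb : b ∈ Set.Ioo 0 bstar) :
    ∃! t : Fin (k + 1) → ℝ, (∀ i, 0 < t i) ∧
      ∀ i, t i ^ 2 * a i + b * t i ^ 4 * d i ^ 2 +
            b * t i ^ 2 * d i * (∑ j ∈ Finset.univ.erase i, t j ^ 2 * d j) = t i ^ p * c i ∧
        (4 - p) * (t i ^ p * c i) < 2 * (t i ^ 2 * a i) := by
  obtain ⟨hb0, hbb⟩ := hb
  have hp2' : (0:ℝ) < p - 2 := by linarith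
  have h4p : (0:ℝ) < 4 - p := by linarith
  have h2S : (0:ℝ) < 2 * S := by linarith
  have hd0 : ∀ i, 0 ≤ d i := fun i => (hd i).1
  have hda : ∀ i, d i ≤ a i := fun i => (hd i).2
  set q : ℝ := 2 / (p - 2) with hqdef
  set r : ℝ := p / (p - 2) with hrdef
  have hq0 : 0 < q := by positivity
  have hq1 : 1 ≤ q := by rw [hqdef, le_div_iff₀ hp2']; linarith
  have hr0 : 0 < r := by rw [hrdef]; positivity
  have hrq : r = q + 1 := by rw [hrdef, hqdef]; field_simp; ring
  -- core estimate : a i ^ r ≤ (2S)^r * c i ^ q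
  have core : ∀ i, a i ^ r ≤ (2*S) ^ r * c i ^ q := by
    intro i
    have h1 : a i ≤ 2 * S * c i ^ (2/p) := by
      have h := hc2 i
      rw [inv_mul_le_iff₀ h2S] at h
      linarith [h]
    calc a i ^ r ≤ (2 * S * c i ^ (2/p)) ^ r :=
          Real.rpow_le_rpow (ha i).le h1 hr0.le
      _ = (2*S) ^ r * (c i ^ (2/p)) ^ r :=
          Real.mul_rpow h2S.le (Real.rpow_nonneg (hc i).le _)
      _ = (2*S) ^ r * c i ^ ((2/p) * r) := by
          rw [← Real.rpow_mul (hc i).le]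
      _ = (2*S) ^ r * c i ^ q := by
          congr 1
          rw [hrdef, hqdef]
          field_simp
  set K : ℝ := (2/(4-p)) ^ q * (2*S) ^ r with hKdef
  have hK0 : 0 < K := by
    apply mul_pos <;> apply Real.rpow_pos_of_pos <;> positivity
  set Sb : ℝ := ((k:ℕ) + 1 : ℝ) * K with hSgdef
  have hSg0 : 0 < Sb := by positivity
  -- basic nonnegativity helpers
  have hnn : ∀ i, ∀ x : ℝ, 0 ≤ x → 0 ≤ b * d i * x :=
    fun i x hx => mul_nonneg (mul_nonneg hb0.le (hd0 i)) hx
  have hnum : ∀ i, ∀ x : ℝ, 0 ≤ x → 0 < a i + b * d i * x :=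
    fun i x hx => by nlinarith [hnn i x hx, ha i]
  have hbasepos : ∀ i, ∀ x : ℝ, 0 ≤ x → 0 < (a i + b * d i * x) / c i :=
    fun i x hx => div_pos (hnum i x hx) (hc i)
  -- smallness of b : b * Sb < (p-2)/(4-p)
  have hbK : b * Sb < (p-2)/(4-p) := by
    have hbbhat : b < bhat := lt_of_lt_of_le hbb (by rw [hbstar]; exact min_le_right _ _)
    have hA1 : (1:ℝ) ≤ 2 ^ r * (2/(4-p)) ^ q := by
      have h1 : (1:ℝ) ≤ 2 ^ r := Real.one_le_rpow (by norm_num) hr0.le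
      have h2 : (1:ℝ) ≤ (2/(4-p)) ^ q := by
        apply Real.one_le_rpow _ hq0.le
        rw [le_div_iff₀ h4p]; linarith
      nlinarith
    have hKinv : ((4-p)/2) ^ q * (2*S) ^ (-r) = K⁻¹ := by
      rw [show (4-p)/2 = (2/(4-p))⁻¹ by rw [inv_div], Real.inv_rpow (by positivity),
        Real.rpow_neg h2S.le, hKdef, mul_inv]
    have hden : (0:ℝ) < 1 + (k:ℝ) * (2 ^ r * (2/(4-p)) ^ q) := by positivity
    have hbhat' : bhat = (p-2)/(4-p) * (1 + (k:ℝ) * (2 ^ r * (2/(4-p)) ^ q))⁻¹ * K⁻¹ := by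
      rw [hbhat, mul_assoc, hKinv]
      ring
    have h2 : b * ((1 + (k:ℝ) * (2 ^ r * (2/(4-p)) ^ q)) * K) < (p-2)/(4-p) := by
      have := mul_lt_mul_of_pos_right hbbhat
        (by positivity : (0:ℝ) < (1 + (k:ℝ) * (2 ^ r * (2/(4-p)) ^ q)) * K)
      calc b * ((1 + (k:ℝ) * (2 ^ r * (2/(4-p)) ^ q)) * K)
          < bhat * ((1 + (k:ℝ) * (2 ^ r * (2/(4-p)) ^ q)) * K) := this
        _ = (p-2)/(4-p) := by
            rw [hbhat']
            field_simp
    have hmono : ((k:ℝ) + 1) * K ≤ (1 + (k:ℝ) * (2 ^ r * (2/(4-p)) ^ q)) * K := by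
      apply mul_le_mul_of_nonneg_right _ hK0.le
      nlinarith [Nat.cast_nonneg (α := ℝ) k]
    calc b * Sb ≤ b * ((1 + (k:ℝ) * (2 ^ r * (2/(4-p)) ^ q)) * K) := by
          rw [hSgdef]; exact mul_le_mul_of_nonneg_left hmono hb0.le
      _ < (p-2)/(4-p) := h2
  -- per-index bound
  have bound2 : ∀ i, ∀ x : ℝ, 0 ≤ x → a i + b * d i * x ≤ 2/(4-p) * a i →
      d i * ((a i + b * d i * x)/ c i) ^ q ≤ K := by
    intro i x hx hle
    have hbase0 : 0 ≤ (a i + b * d i * x)/ c i := (hbasepos i x hx).le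
    have h1 : ((a i + b * d i * x)/ c i) ^ q ≤ (2/(4-p) * a i / c i) ^ q := by
      apply Real.rpow_le_rpow hbase0 _ hq0.le
      exact aux_div_le_div hle (hc i)
    have h2 : (2/(4-p) * a i / c i) ^ q = (2/(4-p)) ^ q * (a i / c i) ^ q := by
      rw [mul_div_assoc, Real.mul_rpow (div_nonneg (by norm_num) h4p.le)
        (div_nonneg (ha i).le (hc i).le)]
    have h3 : a i * (a i / c i) ^ q ≤ (2*S) ^ r := by
      rw [Real.div_rpow (ha i).le (hc i).le]
      rw [mul_div_assoc']
      rw [div_le_iff₀ (Real.rpow_pos_of_pos (hc i) q)]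
      calc a i * a i ^ q = a i ^ (1:ℝ) * a i ^ q := by rw [Real.rpow_one]
        _ = a i ^ ((1:ℝ) + q) := (Real.rpow_add (ha i) 1 q).symm
        _ = a i ^ r := by rw [hrq]; ring_nf
        _ ≤ (2*S) ^ r * c i ^ q := core i
    calc d i * ((a i + b * d i * x)/ c i) ^ q
        ≤ a i * ((2/(4-p) * a i / c i)) ^ q := by
          apply mul_le_mul (hda i) h1 (Real.rpow_nonneg hbase0 q) (ha i).le
      _ = (2/(4-p)) ^ q * (a i * (a i / c i) ^ q) := by rw [h2]; ring
      _ ≤ (2/(4-p)) ^ q * (2*S) ^ r := by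
          apply mul_le_mul_of_nonneg_left h3
            (Real.rpow_nonneg (div_nonneg (by norm_num) h4p.le) q)
      _ = K := hKdef.symm
  -- the fixed point map
  set F : ℝ → ℝ := fun σ => ∑ i, d i * ((a i + b * d i * σ)/ c i) ^ q with hFdef
  have hstep : ∀ i, ∀ x : ℝ, x ≤ Sb → a i + b * d i * x ≤ 2/(4-p) * a i := by
    intro i x hx
    have h1 : b * d i * x ≤ b * Sb * a i := by
      calc b * d i * x ≤ b * d i * Sb :=
            mul_le_mul_of_nonneg_left hx (mul_nonneg hb0.le (hd0 i))
       _ ≤ b * a i * Sb := by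
            apply mul_le_mul_of_nonneg_right _ hSg0.le
            exact mul_le_mul_of_nonneg_left (hda i) hb0.le
       _ = b * Sb * a i := by ring
    have h2 : b * Sb * a i < (p-2)/(4-p) * a i :=
      mul_lt_mul_of_pos_right hbK (ha i)
    have h3 : a i + (p-2)/(4-p) * a i = 2/(4-p) * a i := by
      field_simp
      ring
    linarith
  have hF0 : ∀ σ : ℝ, 0 ≤ σ → 0 ≤ F σ := by
    intro σ hσ
    apply Finset.sum_nonneg
    intro i _
    exact mul_nonneg (hd0 i) (Real.rpow_nonneg (hbasepos i σ hσ).le q)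
  have hFup : ∀ σ : ℝ, 0 ≤ σ → σ ≤ Sb → F σ ≤ Sb := by
    intro σ h0 h1
    calc F σ ≤ ∑ _i : Fin (k+1), K :=
          Finset.sum_le_sum (fun i _ => bound2 i σ h0 (hstep i σ h1))
      _ = Sb := by
          rw [Finset.sum_const, Finset.card_univ, Fintype.card_fin, nsmul_eq_mul]
          push_cast [hSgdef]; ring
  have hFcont : Continuous F := by
    apply continuous_finset_sum
    intro i _
    apply Continuous.mul continuous_const
    apply Continuous.rpow_const
    · exact (continuous_const.add (continuous_const.mul continuous_id)).div_const (c i)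
    · intro x; exact Or.inr hq0.le
  -- existence of fixed point
  have hexist : ∃ σ0 ∈ Set.Icc (0:ℝ) Sb, F σ0 = σ0 := by
    have hG : ContinuousOn (fun σ => F σ - σ) (Set.Icc 0 Sb) :=
      (hFcont.sub continuous_id).continuousOn
    have hmem : (0:ℝ) ∈ Set.Icc ((fun σ => F σ - σ) Sb) ((fun σ => F σ - σ) 0) := by
      constructor
      · simp only
        have := hFup Sb hSg0.le le_rfl
        linarith
      · simp only
        have := hF0 0 le_rfl
        linarith
    obtain ⟨σ0, hσ0, heq⟩ := intermediate_value_Icc' hSg0.le hG hmem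
    exact ⟨σ0, hσ0, by have := sub_eq_zero.mp heq; linarith [this]⟩
  obtain ⟨σ0, hσ0mem, hσ0fix⟩ := hexist
  -- Lipschitz bound
  have hlip : ∀ σ1 σ2 : ℝ, 0 ≤ σ1 → σ1 ≤ σ2 → σ2 ≤ Sb →
      F σ2 - F σ1 ≤ (b * Sb * ((4-p)/(p-2))) * (σ2 - σ1) := by
    intro σ1 σ2 h1 h12 h2M
    have hterm : ∀ i : Fin (k+1),
        d i * ((a i + b * d i * σ2)/ c i) ^ q - d i * ((a i + b * d i * σ1)/ c i) ^ q
        ≤ (q * b * (2/(4-p)) ^ (q-1) * (2*S) ^ r) * (σ2 - σ1) := by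
      intro i
      set X1 : ℝ := (a i + b * d i * σ1)/ c i with hX1
      set X2 : ℝ := (a i + b * d i * σ2)/ c i with hX2
      have hX10 : 0 ≤ X1 := (hbasepos i σ1 h1).le
      have hX12 : X1 ≤ X2 := by
        rw [hX1, hX2]
        apply aux_div_le_div _ (hc i)
        nlinarith [hnn i (σ2 - σ1) (by linarith : (0:ℝ) ≤ σ2 - σ1)]
      have haux := aux_rpow_sub_le hq1 hX10 hX12
      have hX2up : X2 ≤ 2/(4-p) * a i / c i := by
        rw [hX2]
        exact aux_div_le_div (hstep i σ2 h2M) (hc i)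
      have hX2q : X2 ^ (q-1) ≤ (2/(4-p) * a i / c i) ^ (q-1) :=
        Real.rpow_le_rpow (le_trans hX10 hX12) hX2up (by linarith)
      have hdiff : X2 - X1 = b * d i * (σ2 - σ1) / c i := by
        rw [hX1, hX2]; ring
      have hcoef : d i * (q * X2 ^ (q-1) * (X2 - X1))
          ≤ (q * b * (2/(4-p)) ^ (q-1) * (2*S) ^ r) * (σ2 - σ1) := by
        rw [hdiff]
        have hs : 0 ≤ σ2 - σ1 := by linarith
        have hBq : (2/(4-p) * a i / c i) ^ (q-1)
            = (2/(4-p)) ^ (q-1) * (a i ^ (q-1) / c i ^ (q-1)) := by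
          rw [mul_div_assoc, Real.mul_rpow (div_nonneg (by norm_num) h4p.le)
            (div_nonneg (ha i).le (hc i).le), Real.div_rpow (ha i).le (hc i).le]
        have key : d i * X2 ^ (q-1) * (d i / c i) ≤ (2/(4-p)) ^ (q-1) * (2*S) ^ r := by
          have hXq0 : 0 ≤ X2 ^ (q-1) := Real.rpow_nonneg (le_trans hX10 hX12) _
          have hdc : d i / c i ≤ a i / c i := aux_div_le_div (hda i) (hc i)
          have hdc0 : 0 ≤ d i / c i := div_nonneg (hd0 i) (hc i).le
          have step1 : d i * X2 ^ (q-1) * (d i / c i)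
              ≤ a i * (2/(4-p) * a i / c i) ^ (q-1) * (a i / c i) := by
            apply mul_le_mul _ hdc hdc0 (mul_nonneg (ha i).le (Real.rpow_nonneg
              (div_nonneg (mul_nonneg (div_nonneg (by norm_num) h4p.le) (ha i).le)
                (hc i).le) _))
            exact mul_le_mul (hda i) hX2q hXq0 (ha i).le
          have step2 : a i * (2/(4-p) * a i / c i) ^ (q-1) * (a i / c i)
              = (2/(4-p)) ^ (q-1) * (a i ^ (1:ℝ) * a i ^ (q-1) * a i ^ (1:ℝ)
                  / (c i ^ (q-1) * c i ^ (1:ℝ))) := by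
            rw [hBq, Real.rpow_one, Real.rpow_one]
            field_simp
          have step3 : a i ^ (1:ℝ) * a i ^ (q-1) * a i ^ (1:ℝ) = a i ^ r := by
            rw [← Real.rpow_add (ha i), ← Real.rpow_add (ha i), hrq]
            ring_nf
          have step4 : c i ^ (q-1) * c i ^ (1:ℝ) = c i ^ q := by
            rw [← Real.rpow_add (hc i)]
            ring_nf
          have step5 : a i ^ r / c i ^ q ≤ (2*S) ^ r := by
            rw [div_le_iff₀ (Real.rpow_pos_of_pos (hc i) q)]
            exact core i
          calc d i * X2 ^ (q-1) * (d i / c i)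
              ≤ a i * (2/(4-p) * a i / c i) ^ (q-1) * (a i / c i) := step1
            _ = (2/(4-p)) ^ (q-1) * (a i ^ r / c i ^ q) := by
                rw [step2, step3, step4]
            _ ≤ (2/(4-p)) ^ (q-1) * (2*S) ^ r :=
                mul_le_mul_of_nonneg_left step5
                  (Real.rpow_nonneg (div_nonneg (by norm_num) h4p.le) _)
        calc d i * (q * X2 ^ (q-1) * (b * d i * (σ2 - σ1) / c i))
            = q * b * (d i * X2 ^ (q-1) * (d i / c i)) * (σ2 - σ1) := by ring
          _ ≤ q * b * ((2/(4-p)) ^ (q-1) * (2*S) ^ r) * (σ2 - σ1) := by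
              apply mul_le_mul_of_nonneg_right _ hs
              apply mul_le_mul_of_nonneg_left key (mul_nonneg hq0.le hb0.le)
          _ = (q * b * (2/(4-p)) ^ (q-1) * (2*S) ^ r) * (σ2 - σ1) := by ring
      calc d i * X2 ^ q - d i * X1 ^ q = d i * (X2 ^ q - X1 ^ q) := by ring
        _ ≤ d i * (q * X2 ^ (q-1) * (X2 - X1)) := mul_le_mul_of_nonneg_left haux (hd0 i)
        _ ≤ (q * b * (2/(4-p)) ^ (q-1) * (2*S) ^ r) * (σ2 - σ1) := hcoef
    have hsum : F σ2 - F σ1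
        ≤ ((k:ℝ)+1) * ((q * b * (2/(4-p)) ^ (q-1) * (2*S) ^ r) * (σ2 - σ1)) := by
      rw [hFdef]
      simp only
      rw [← Finset.sum_sub_distrib]
      calc ∑ i, (d i * ((a i + b * d i * σ2)/ c i) ^ q
              - d i * ((a i + b * d i * σ1)/ c i) ^ q)
          ≤ ∑ _i : Fin (k+1), (q * b * (2/(4-p)) ^ (q-1) * (2*S) ^ r) * (σ2 - σ1) :=
            Finset.sum_le_sum (fun i _ => hterm i)
        _ = ((k:ℝ)+1) * ((q * b * (2/(4-p)) ^ (q-1) * (2*S) ^ r) * (σ2 - σ1)) := by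
            rw [Finset.sum_const, Finset.card_univ, Fintype.card_fin, nsmul_eq_mul]
            push_cast; ring
    have hLeq : ((k:ℝ)+1) * (q * b * (2/(4-p)) ^ (q-1) * (2*S) ^ r)
        = b * Sb * ((4-p)/(p-2)) := by
      have hsplit : (2/(4-p)) ^ (q-1 : ℝ) = (2/(4-p)) ^ q * ((4-p)/2) := by
        rw [show q - 1 = q + (-1) by ring,
          Real.rpow_add (div_pos (by norm_num) h4p : (0:ℝ) < 2/(4-p)),
          Real.rpow_neg_one, inv_div]
      rw [hsplit, hSgdef, hKdef, hqdef]
      field_simp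
    calc F σ2 - F σ1
        ≤ ((k:ℝ)+1) * ((q * b * (2/(4-p)) ^ (q-1) * (2*S) ^ r) * (σ2 - σ1)) := hsum
      _ = (b * Sb * ((4-p)/(p-2))) * (σ2 - σ1) := by rw [← hLeq]; ring
  have hL1 : b * Sb * ((4-p)/(p-2)) < 1 := by
    have := mul_lt_mul_of_pos_right hbK (div_pos h4p hp2' : (0:ℝ) < (4-p)/(p-2))
    calc b * Sb * ((4-p)/(p-2)) < (p-2)/(4-p) * ((4-p)/(p-2)) := this
      _ = 1 := by field_simp
  have hfixuniq : ∀ σ ∈ Set.Icc (0:ℝ) Sb, F σ = σ → σ = σ0 := by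
    intro σ hσ hfix
    by_contra hne
    rcases lt_or_gt_of_ne hne with hlt | hgt
    · have := hlip σ σ0 hσ.1 hlt.le hσ0mem.2
      rw [hfix, hσ0fix] at this
      nlinarith [hL1, sub_pos.mpr hlt]
    · have := hlip σ0 σ hσ0mem.1 hgt.le hσ.2
      rw [hfix, hσ0fix] at this
      nlinarith [hL1, sub_pos.mpr hgt]
  -- define the solution
  set t0 : Fin (k+1) → ℝ := fun i => ((a i + b * d i * σ0)/ c i) ^ (1/(p-2)) with ht0def
  have hbase : ∀ i, 0 < (a i + b * d i * σ0)/ c i := fun i => hbasepos i σ0 hσ0mem.1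
  have ht0pos : ∀ i, 0 < t0 i := fun i => Real.rpow_pos_of_pos (hbase i) _
  have ht0sq : ∀ i, t0 i ^ 2 = ((a i + b * d i * σ0)/ c i) ^ q := by
    intro i
    rw [ht0def]
    simp only
    rw [← Real.rpow_natCast (((a i + b * d i * σ0)/ c i) ^ (1/(p-2))) 2,
      ← Real.rpow_mul (hbase i).le]
    congr 1
    rw [hqdef]
    push_cast
    field_simp
  have ht0pm2 : ∀ i, t0 i ^ (p-2) = (a i + b * d i * σ0)/ c i := by
    intro i
    rw [ht0def]
    simp only
    rw [← Real.rpow_mul (hbase i).le]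
    rw [show 1/(p-2) * (p-2) = 1 by field_simp, Real.rpow_one]
  have hsum0 : ∑ j, t0 j ^ 2 * d j = σ0 := by
    rw [← hσ0fix, hFdef]
    apply Finset.sum_congr rfl
    intro j _
    rw [ht0sq j]
    ring
  refine ⟨t0, ⟨ht0pos, ?_⟩, ?_⟩
  · intro i
    have hpart : ∑ j ∈ Finset.univ.erase i, t0 j ^ 2 * d j = σ0 - t0 i ^ 2 * d i := by
      have := Finset.sum_erase_add Finset.univ (fun j => t0 j ^ 2 * d j) (Finset.mem_univ i)
      rw [hsum0] at this
      linarith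
    have htp : t0 i ^ p * c i = t0 i ^ 2 * (a i + b * d i * σ0) := by
      have h1 : t0 i ^ p = t0 i ^ 2 * t0 i ^ (p-2) := by
        rw [← Real.rpow_natCast (t0 i) 2, ← Real.rpow_add (ht0pos i)]
        norm_num
      rw [h1, ht0pm2 i]
      field_simp
      try exact mul_div_cancel_right₀ _ (hc i).ne'
    constructor
    · rw [hpart, htp]
      ring
    · rw [htp]
      have ht2 : 0 < t0 i ^ 2 := pow_pos (ht0pos i) 2
      have hσle : σ0 ≤ Sb := hσ0mem.2
      have hkey : b * d i * σ0 < (p-2)/(4-p) * a i := by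
        have h1 : b * d i * σ0 ≤ b * Sb * a i := by
          calc b * d i * σ0 ≤ b * d i * Sb :=
                mul_le_mul_of_nonneg_left hσle (mul_nonneg hb0.le (hd0 i))
            _ ≤ b * a i * Sb := by
                apply mul_le_mul_of_nonneg_right _ hSg0.le
                exact mul_le_mul_of_nonneg_left (hda i) hb0.le
            _ = b * Sb * a i := by ring
        have h2 : b * Sb * a i < (p-2)/(4-p) * a i := mul_lt_mul_of_pos_right hbK (ha i)
        linarith
      have hineq : (4-p) * (a i + b * d i * σ0) < 2 * a i := by
        have h5 : (4-p) * ((p-2)/(4-p) * a i) = (p-2) * a i := by field_simp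
        nlinarith
      calc (4-p) * (t0 i ^ 2 * (a i + b * d i * σ0))
          = t0 i ^ 2 * ((4-p) * (a i + b * d i * σ0)) := by ring
        _ < t0 i ^ 2 * (2 * a i) := mul_lt_mul_of_pos_left hineq ht2
        _ = 2 * (t0 i ^ 2 * a i) := by ring
  · -- uniqueness
    rintro t ⟨htpos, hteq⟩
    set σt : ℝ := ∑ j, t j ^ 2 * d j with hσtdef
    have hσt0 : 0 ≤ σt := by
      apply Finset.sum_nonneg
      intro j _
      exact mul_nonneg (by positivity) (hd0 j)
    have hE : ∀ i, t i ^ (p-2) * c i = a i + b * d i * σt := by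
      intro i
      obtain ⟨heq, _⟩ := hteq i
      have hpart : ∑ j ∈ Finset.univ.erase i, t j ^ 2 * d j = σt - t i ^ 2 * d i := by
        have := Finset.sum_erase_add Finset.univ (fun j => t j ^ 2 * d j) (Finset.mem_univ i)
        rw [← hσtdef] at this
        linarith
      have hsplit : t i ^ p = t i ^ 2 * t i ^ (p-2) := by
        rw [← Real.rpow_natCast (t i) 2, ← Real.rpow_add (htpos i)]
        norm_num
      rw [hpart, hsplit] at heq
      have ht2 : (0:ℝ) < t i ^ 2 := pow_pos (htpos i) 2
      have h6 : t i ^ 2 * (a i + b * d i * σt) = t i ^ 2 * (t i ^ (p-2) * c i) := by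
        nlinarith [heq]
      have := mul_left_cancel₀ ht2.ne' h6
      linarith
    have hCon : ∀ i, a i + b * d i * σt ≤ 2/(4-p) * a i := by
      intro i
      obtain ⟨heq, hcon⟩ := hteq i
      have hsplit : t i ^ p = t i ^ 2 * t i ^ (p-2) := by
        rw [← Real.rpow_natCast (t i) 2, ← Real.rpow_add (htpos i)]
        norm_num
      rw [hsplit] at hcon
      have ht2 : (0:ℝ) < t i ^ 2 := pow_pos (htpos i) 2
      have h1 : (4-p) * (t i ^ (p-2) * c i) < 2 * a i := by
        have h2 : t i ^ 2 * ((4-p) * (t i ^ (p-2) * c i)) < t i ^ 2 * (2 * a i) := by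
          nlinarith [hcon]
        exact lt_of_mul_lt_mul_left h2 ht2.le
      rw [hE i] at h1
      rw [show 2/(4-p) * a i = 2 * a i / (4-p) by ring, le_div_iff₀ h4p]
      nlinarith
    have htsq : ∀ i, t i ^ 2 = ((a i + b * d i * σt)/ c i) ^ q := by
      intro i
      have h1 : t i ^ (p-2) = (a i + b * d i * σt)/ c i := by
        rw [eq_div_iff (hc i).ne']
        exact hE i
      have h2 : (t i ^ (p-2)) ^ q = t i ^ ((p-2) * q) := (Real.rpow_mul (htpos i).le _ _).symm
      rw [← h1, h2, show (p-2) * q = 2 by rw [hqdef]; field_simp,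
        show ((2:ℝ)) = ((2:ℕ):ℝ) by norm_num, Real.rpow_natCast]
    have hσtfix : F σt = σt := by
      rw [hFdef]
      simp only
      nth_rewrite 2 [hσtdef]
      apply Finset.sum_congr rfl
      intro j _
      rw [htsq j]
      ring
    have hσtup : σt ≤ Sb := by
      rw [hσtdef]
      calc ∑ j, t j ^ 2 * d j ≤ ∑ _j : Fin (k+1), K := by
            apply Finset.sum_le_sum
            intro j _
            rw [htsq j]
            calc ((a j + b * d j * σt)/ c j) ^ q * d j
                = d j * ((a j + b * d j * σt)/ c j) ^ q := by ring
              _ ≤ K := bound2 j σt hσt0 (hCon j)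
        _ = Sb := by
            rw [Finset.sum_const, Finset.card_univ, Fintype.card_fin, nsmul_eq_mul]
            push_cast [hSgdef]; ring
    have hσeq : σt = σ0 := hfixuniq σt ⟨hσt0, hσtup⟩ hσtfix
    funext i
    have h1 : t i ^ (p-2) = (a i + b * d i * σ0)/ c i := by
      rw [← hσeq, eq_div_iff (hc i).ne']
      exact hE i
    have h3 : t i ^ (p-2) = t0 i ^ (p-2) := by rw [h1, ht0pm2 i]
    have h4 : (t i ^ (p-2)) ^ (1/(p-2)) = (t0 i ^ (p-2)) ^ (1/(p-2)) := by rw [h3]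
    rw [← Real.rpow_mul (htpos i).le, ← Real.rpow_mul (ht0pos i).le,
      show (p-2) * (1/(p-2)) = 1 by field_simp, Real.rpow_one, Real.rpow_one] at h4
    exact h4
end

section
/- Let $p$ be a real number with $2 < p < 4$, let $k \ge 0$ be an integer, let $S > 0$, let $\mu \in [0,1]$, and let $b > 0$ satisfy $b\left(1 + k\, 2^{p/(p-2)}\left(\frac{2}{4-p}\right)^{2/(p-2)}\right) < \frac{p-2}{4-p}\left(\frac{4-p}{2}\right)^{2/(p-2)}(2S)^{-p/(p-2)}$. Suppose for each $i \in \{1, \dots, k+1\}$ we are given $a_i > 0$, $c_i > 0$, $d_i \in [0, a_i]$ with $c_i \le S^{-p/2} a_i^{p/2}$ and $c_i^{2/p} \ge (2S)^{-1} a_i$, and positive reals $t_1, \dots, t_{k+1}$ such that for each $i$: $t_i^2 a_i + b t_i^4 d_i^2 + \mu\, b t_i^2 d_i \sum_{j \ne i} t_j^2 d_j = t_i^p c_i$ and $(4-p) t_i^p c_i \le 2 t_i^2 a_i$. Then in fact $(4-p) t_i^p c_i < 2 t_i^2 a_i$ for every $i$. -/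
/-- claim (2.12)/(2.17) in scalar form. For `2 < p < 4`, `k ≥ 0`,
`S > 0`, `μ ∈ [0,1]`, and `b > 0` with
`b (1 + k 2^(p/(p-2)) (2/(4-p))^(2/(p-2))) < ((p-2)/(4-p)) ((4-p)/2)^(2/(p-2)) (2S)^(-p/(p-2))`,
if data `aᵢ > 0`, `cᵢ > 0`, `dᵢ ∈ [0, aᵢ]` satisfy the Sobolev-type bounds and positive
`t₁,…,t_{k+1}` solve the μ-coupled Nehari system with the non-strict constraints, then
the strict constraints hold. -/
theorem stmt_4 (p : ℝ) (hp2 : 2 < p) (hp4 : p < 4) (k : ℕ) (S : ℝ) (hS : 0 < S)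
    (μ : ℝ) (hμ : μ ∈ Set.Icc (0 : ℝ) 1) (b : ℝ) (hb : 0 < b)
    (hbsmall : b * (1 + (k : ℝ) * 2 ^ (p / (p - 2)) * (2 / (4 - p)) ^ (2 / (p - 2))) <
        (p - 2) / (4 - p) * ((4 - p) / 2) ^ (2 / (p - 2)) * (2 * S) ^ (-(p / (p - 2))))
    (a c d : Fin (k + 1) → ℝ)
    (ha : ∀ i, 0 < a i) (hc : ∀ i, 0 < c i) (hd : ∀ i, d i ∈ Set.Icc 0 (a i))
    (hc1 : ∀ i, c i ≤ S ^ (-(p / 2)) * a i ^ (p / 2))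
    (hc2 : ∀ i, (2 * S)⁻¹ * a i ≤ c i ^ (2 / p))
    (t : Fin (k + 1) → ℝ) (ht : ∀ i, 0 < t i)
    (heq : ∀ i, t i ^ 2 * a i + b * t i ^ 4 * d i ^ 2 +
        μ * b * t i ^ 2 * d i * (∑ j ∈ Finset.univ.erase i, t j ^ 2 * d j) = t i ^ p * c i)
    (hle : ∀ i, (4 - p) * (t i ^ p * c i) ≤ 2 * (t i ^ 2 * a i)) :
    ∀ i, (4 - p) * (t i ^ p * c i) < 2 * (t i ^ 2 * a i) := by
  obtain ⟨hμ0, hμ1⟩ := hμ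
  have hp2' : (0:ℝ) < p - 2 := by linarith
  have hp4' : (0:ℝ) < 4 - p := by linarith
  have hq : (0:ℝ) < 2 / (p - 2) := by positivity
  set M : ℝ := (2 / (4 - p)) ^ (2 / (p - 2)) * (2 * S) ^ (p / (p - 2)) with hMdef
  have hM0 : 0 < M := by positivity
  -- key: t j ^ 2 * a j ≤ M for every j
  have key : ∀ j, t j ^ 2 * a j ≤ M := by
    intro j
    have htj := ht j
    have haj := ha j
    have hcj := hc j
    -- c lower bound
    have hclow : (2 * S) ^ (-(p / 2)) * a j ^ (p / 2) ≤ c j := by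
      have h1 : ((2 * S)⁻¹ * a j) ^ (p / 2) ≤ (c j ^ (2 / p)) ^ (p / 2) :=
        Real.rpow_le_rpow (by positivity) (hc2 j) (by positivity)
      rw [← Real.rpow_mul hcj.le] at h1
      have hpe : 2 / p * (p / 2) = 1 := by field_simp
      rw [hpe, Real.rpow_one, Real.mul_rpow (by positivity) haj.le,
        Real.inv_rpow (by positivity), ← Real.rpow_neg (by positivity)] at h1
      exact h1
    -- t^(p-2) bound from hle
    have hpow : t j ^ (p - 2) * ((4 - p) * c j) ≤ 2 * a j := by
      have h := hle j
      have hsplit : t j ^ p = t j ^ (p - 2) * t j ^ 2 := by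
        rw [← Real.rpow_natCast (t j) 2, ← Real.rpow_add htj]
        norm_num
      rw [hsplit] at h
      have h2 : (0:ℝ) < t j ^ 2 := by positivity
      have h3 : t j ^ (p - 2) * ((4 - p) * c j) * t j ^ 2 ≤ 2 * a j * t j ^ 2 := by
        nlinarith [h]
      exact le_of_mul_le_mul_right h3 h2
    -- the scalar power inequality
    have hT : (0:ℝ) < (2 * S) ^ (p / 2) := Real.rpow_pos_of_pos (by positivity) _
    have hA : (0:ℝ) < a j ^ ((p - 2) / 2) := Real.rpow_pos_of_pos haj _
    have htp : (0:ℝ) ≤ t j ^ (p - 2) := Real.rpow_nonneg htj.le _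
    have hK : (t j ^ 2 * a j) ^ ((p - 2) / 2) ≤ 2 / (4 - p) * (2 * S) ^ (p / 2) := by
      have hsplit : (t j ^ 2 * a j) ^ ((p - 2) / 2) = t j ^ (p - 2) * a j ^ ((p - 2) / 2) := by
        rw [Real.mul_rpow (by positivity) haj.le]
        congr 1
        rw [← Real.rpow_natCast (t j) 2, ← Real.rpow_mul htj.le]
        congr 1
        push_cast
        ring
      rw [hsplit]
      -- from hpow and hclow
      have ha1 : a j ^ (p / 2) = a j * a j ^ ((p - 2) / 2) := by
        rw [show p / 2 = 1 + (p - 2) / 2 by ring, Real.rpow_add haj, Real.rpow_one]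
      have hneg : (2 * S) ^ (-(p / 2)) = ((2 * S) ^ (p / 2))⁻¹ :=
        Real.rpow_neg (by positivity) _
      have step : t j ^ (p - 2) * ((4 - p) * (((2 * S) ^ (p / 2))⁻¹ *
          (a j * a j ^ ((p - 2) / 2)))) ≤ 2 * a j := by
        refine le_trans ?_ hpow
        have h4 : (4 - p) * (((2 * S) ^ (p / 2))⁻¹ * (a j * a j ^ ((p - 2) / 2)))
            ≤ (4 - p) * c j := by
          apply mul_le_mul_of_nonneg_left _ hp4'.le
          rw [← ha1, ← hneg]; exact hclow
        exact mul_le_mul_of_nonneg_left h4 htp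
      have step2 := mul_le_mul_of_nonneg_right step hT.le
      have hTne : ((2 * S) ^ (p / 2)) ≠ 0 := ne_of_gt hT
      rw [div_mul_eq_mul_div, le_div_iff₀ hp4']
      calc t j ^ (p - 2) * a j ^ ((p - 2) / 2) * (4 - p)
          = (t j ^ (p - 2) * ((4 - p) * (((2 * S) ^ (p / 2))⁻¹ *
            (a j * a j ^ ((p - 2) / 2)))) * (2 * S) ^ (p / 2)) / a j := by
            field_simp
        _ ≤ (2 * a j * (2 * S) ^ (p / 2)) / a j := by
            gcongr
        _ = 2 * (2 * S) ^ (p / 2) := by field_simp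
    -- raise hK to power 2/(p-2)
    have hfin := Real.rpow_le_rpow (by positivity) hK hq.le
    rw [← Real.rpow_mul (by positivity : (0:ℝ) ≤ t j ^ 2 * a j)] at hfin
    have he1 : (p - 2) / 2 * (2 / (p - 2)) = 1 := by field_simp
    rw [he1, Real.rpow_one, Real.mul_rpow (by positivity) hT.le,
      ← Real.rpow_mul (by positivity : (0:ℝ) ≤ 2 * S)] at hfin
    have he2 : p / 2 * (2 / (p - 2)) = p / (p - 2) := by field_simp
    rw [he2] at hfin
    exact hfin
  -- small-b consequence
  have hF : (1:ℝ) ≤ 2 ^ (p / (p - 2)) * (2 / (4 - p)) ^ (2 / (p - 2)) := by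
    have h1 : (1:ℝ) ≤ 2 ^ (p / (p - 2)) := by
      calc (1:ℝ) = 1 ^ (p / (p - 2)) := (Real.one_rpow _).symm
        _ ≤ 2 ^ (p / (p - 2)) := Real.rpow_le_rpow (by norm_num) (by norm_num) (by positivity)
    have h2 : (1:ℝ) ≤ (2 / (4 - p)) ^ (2 / (p - 2)) := by
      calc (1:ℝ) = 1 ^ (2 / (p - 2)) := (Real.one_rpow _).symm
        _ ≤ (2 / (4 - p)) ^ (2 / (p - 2)) := by
            apply Real.rpow_le_rpow (by norm_num) _ hq.le
            rw [le_div_iff₀ hp4']; linarith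
    nlinarith
  have hMinv : ((4 - p) / 2) ^ (2 / (p - 2)) * (2 * S) ^ (-(p / (p - 2))) = M⁻¹ := by
    rw [hMdef, mul_inv, Real.rpow_neg (by positivity),
      show (4 - p) / 2 = (2 / (4 - p))⁻¹ by rw [inv_div],
      Real.inv_rpow (by positivity)]
  have hbM : (4 - p) * (b * (1 + (k : ℝ)) * M) < p - 2 := by
    rw [mul_assoc ((p - 2) / (4 - p)), hMinv] at hbsmall
    have h5 := mul_lt_mul_of_pos_right hbsmall hM0
    rw [show (p - 2) / (4 - p) * M⁻¹ * M = (p - 2) / (4 - p) by field_simp] at h5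
    have h6 : b * (1 + (k : ℝ)) * M ≤
        b * (1 + (k : ℝ) * 2 ^ (p / (p - 2)) * (2 / (4 - p)) ^ (2 / (p - 2))) * M := by
      have : b * (1 + (k : ℝ)) ≤
          b * (1 + (k : ℝ) * 2 ^ (p / (p - 2)) * (2 / (4 - p)) ^ (2 / (p - 2))) := by
        have hk : (0:ℝ) ≤ (k : ℝ) := Nat.cast_nonneg k
        nlinarith [mul_le_mul_of_nonneg_left hF hk, hb.le]
      exact mul_le_mul_of_nonneg_right this hM0.le
    have h7 : b * (1 + (k : ℝ)) * M < (p - 2) / (4 - p) := lt_of_le_of_lt h6 h5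
    rw [lt_div_iff₀ hp4'] at h7
    linarith [h7]
  -- main argument
  intro i
  rcases lt_or_eq_of_le (hle i) with h | h
  · exact h
  exfalso
  set Ssum : ℝ := ∑ j ∈ Finset.univ.erase i, t j ^ 2 * d j with hSdef
  have hsum0 : 0 ≤ Ssum := by
    apply Finset.sum_nonneg
    intro j _
    exact mul_nonneg (by positivity) (hd j).1
  have hsumM : Ssum ≤ (k : ℝ) * M := by
    have hcard : (Finset.univ.erase i).card = k := by
      rw [Finset.card_erase_of_mem (Finset.mem_univ i), Finset.card_univ]
      simp
    calc Ssum ≤ (Finset.univ.erase i).card • M := by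
          apply Finset.sum_le_card_nsmul
          intro j _
          calc t j ^ 2 * d j ≤ t j ^ 2 * a j :=
                mul_le_mul_of_nonneg_left (hd j).2 (by positivity)
            _ ≤ M := key j
      _ = (k : ℝ) * M := by rw [hcard, nsmul_eq_mul]
  have hti := ht i
  have hu0 : (0:ℝ) < t i ^ 2 * a i := mul_pos (pow_pos hti 2) (ha i)
  have hEeq : (4 - p) * (b * t i ^ 4 * d i ^ 2 + μ * b * t i ^ 2 * d i * Ssum)
      = (p - 2) * (t i ^ 2 * a i) := by
    have h8 := heq i
    rw [← hSdef] at h8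
    rw [← h8] at h
    linear_combination h
  have hd0 := (hd i).1
  have hd1 := (hd i).2
  have hE1 : b * t i ^ 4 * d i ^ 2 ≤ b * M * (t i ^ 2 * a i) := by
    have h1 : t i ^ 2 * d i ≤ t i ^ 2 * a i := mul_le_mul_of_nonneg_left hd1 (by positivity)
    have h2 : (0:ℝ) ≤ t i ^ 2 * d i := mul_nonneg (by positivity) hd0
    have h3 : (t i ^ 2 * d i) ^ 2 ≤ (t i ^ 2 * a i) ^ 2 := by nlinarith [h1, h2]
    have h4 : (t i ^ 2 * a i) ^ 2 ≤ M * (t i ^ 2 * a i) :=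
      mul_le_mul_of_nonneg_right (key i) hu0.le |>.trans_eq' (by ring)
    calc b * t i ^ 4 * d i ^ 2 = b * (t i ^ 2 * d i) ^ 2 := by ring
      _ ≤ b * (t i ^ 2 * a i) ^ 2 := mul_le_mul_of_nonneg_left h3 hb.le
      _ ≤ b * (M * (t i ^ 2 * a i)) := mul_le_mul_of_nonneg_left h4 hb.le
      _ = b * M * (t i ^ 2 * a i) := by ring
  have hE2 : μ * b * t i ^ 2 * d i * Ssum ≤ b * ((k : ℝ) * M) * (t i ^ 2 * a i) := by
    have hA : μ * b * t i ^ 2 * d i ≤ b * t i ^ 2 * d i := by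
      have := mul_le_mul_of_nonneg_right hμ1
        (mul_nonneg (mul_nonneg hb.le (by positivity : (0:ℝ) ≤ t i ^ 2)) hd0)
      calc μ * b * t i ^ 2 * d i = μ * (b * t i ^ 2 * d i) := by ring
        _ ≤ 1 * (b * t i ^ 2 * d i) := this
        _ = b * t i ^ 2 * d i := by ring
    have hB : b * t i ^ 2 * d i * Ssum ≤ b * t i ^ 2 * a i * ((k : ℝ) * M) := by
      have hkM : (0:ℝ) ≤ (k : ℝ) * M := mul_nonneg (Nat.cast_nonneg k) hM0.le
      have hx : b * t i ^ 2 * d i ≤ b * t i ^ 2 * a i := by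
        apply mul_le_mul_of_nonneg_left hd1
        positivity
      exact mul_le_mul hx hsumM hsum0
        (mul_nonneg (mul_nonneg hb.le (by positivity)) (ha i).le)
    calc μ * b * t i ^ 2 * d i * Ssum ≤ b * t i ^ 2 * d i * Ssum :=
          mul_le_mul_of_nonneg_right hA hsum0
      _ ≤ b * t i ^ 2 * a i * ((k : ℝ) * M) := hB
      _ = b * ((k : ℝ) * M) * (t i ^ 2 * a i) := by ring
  have hE : (4 - p) * (b * t i ^ 4 * d i ^ 2 + μ * b * t i ^ 2 * d i * Ssum)
      ≤ (4 - p) * (b * M * (t i ^ 2 * a i) + b * ((k : ℝ) * M) * (t i ^ 2 * a i)) :=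
    mul_le_mul_of_nonneg_left (add_le_add hE1 hE2) hp4'.le
  have hmul := mul_lt_mul_of_pos_right hbM hu0
  linarith [hEeq, hE, hmul]
end

section
/- Let $p$ be a real number with $2 < p < 4$, let $k \ge 0$ be an integer, and let $b \ge 0$. Suppose for each $i \in \{1, \dots, k+1\}$ we are given real numbers $a_i > 0$, $c_i > 0$, $d_i \ge 0$ satisfying $(4-p) c_i < 2 a_i$. Then the $(k+1) \times (k+1)$ real matrix $N$ with diagonal entries $N_{ii} = (4-p) c_i - 2 a_i - 2 b\, d_i \sum_{j \ne i} d_j$ and off-diagonal entries $N_{ij} = 2 b\, d_i d_j$ (for $i \ne j$) is invertible. -/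
/-- core of Lemma 2.2 in scalar form. For `2 < p < 4`, `b ≥ 0`, and data
`aᵢ > 0`, `cᵢ > 0`, `dᵢ ≥ 0` with `(4-p) cᵢ < 2 aᵢ`, the matrix with diagonal entries
`(4-p) cᵢ - 2 aᵢ - 2 b dᵢ ∑_{j ≠ i} dⱼ` and off-diagonal entries `2 b dᵢ dⱼ` is
invertible. -/
theorem stmt_5 (p : ℝ) (hp2 : 2 < p) (hp4 : p < 4) (k : ℕ) (b : ℝ) (hb : 0 ≤ b)
    (a c d : Fin (k + 1) → ℝ)
    (ha : ∀ i, 0 < a i) (hc : ∀ i, 0 < c i) (hd : ∀ i, 0 ≤ d i)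
    (hcon : ∀ i, (4 - p) * c i < 2 * a i)
    (N : Matrix (Fin (k + 1)) (Fin (k + 1)) ℝ)
    (hN : ∀ i j, N i j =
      if i = j then (4 - p) * c i - 2 * a i - 2 * b * d i * (∑ l ∈ Finset.univ.erase i, d l)
      else 2 * b * d i * d j) :
    IsUnit N := by
  rw [Matrix.isUnit_iff_isUnit_det, isUnit_iff_ne_zero]
  apply det_ne_zero_of_sum_row_lt_diag
  intro i
  have hoff : ∀ j ∈ Finset.univ.erase i, ‖N i j‖ = 2 * b * d i * d j := by
    intro j hj
    have hji : j ≠ i := Finset.ne_of_mem_erase hj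
    rw [hN i j, if_neg (Ne.symm hji), Real.norm_eq_abs,
      abs_of_nonneg (mul_nonneg (mul_nonneg (mul_nonneg two_pos.le hb) (hd i)) (hd j))]
  rw [Finset.sum_congr rfl hoff]
  have hsum : 0 ≤ ∑ l ∈ Finset.univ.erase i, d l :=
    Finset.sum_nonneg fun l _ => hd l
  have hdiag : N i i = (4 - p) * c i - 2 * a i - 2 * b * d i * ∑ l ∈ Finset.univ.erase i, d l := by
    rw [hN i i, if_pos rfl]
  rw [hdiag, Real.norm_eq_abs, abs_of_nonpos (by nlinarith [hcon i, mul_nonneg (mul_nonneg (mul_nonneg (by norm_num : (0:ℝ) ≤ 2) hb) (hd i)) hsum]), ← Finset.mul_sum]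
  nlinarith [hcon i]
end

section
/- Let $p$ be a real number with $2 < p < 4$, let $k \ge 0$ be an integer, and let $b \ge 0$. Suppose for each $i \in \{1, \dots, k+1\}$ we are given real numbers $a_i > 0$, $c_i > 0$, $d_i \ge 0$ satisfying $(4-p) c_i < 2 a_i$ and $a_i + b d_i^2 + b d_i \sum_{j \ne i} d_j \le c_i$. Then there exists a $(k+1)$-tuple $(\widehat{t}_1, \dots, \widehat{t}_{k+1})$ with $0 < \widehat{t}_i \le 1$ for each $i$ such that for each $i$: $\widehat{t}_i^2 a_i + b \widehat{t}_i^4 d_i^2 + b \widehat{t}_i^2 d_i \sum_{j \ne i} \widehat{t}_j^2 d_j = \widehat{t}_i^p c_i$ and $(4-p) \widehat{t}_i^p c_i < 2 \widehat{t}_i^2 a_i$. -/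
open Set Filter Topology

noncomputable def stmt6rset (q C a β γ : ℝ) : Set ℝ :=
  {t : ℝ | t ∈ Set.Icc (0:ℝ) 1 ∧ a + β * t ^ 2 + γ ≤ C * t ^ q}

noncomputable def stmt6tmin (q C a β γ : ℝ) : ℝ := sInf (stmt6rset q C a β γ)

lemma stmt6rset_bddBelow (q C a β γ : ℝ) : BddBelow (stmt6rset q C a β γ) :=
  ⟨0, fun _ ht => ht.1.1⟩

lemma stmt6one_mem (q C a β γ : ℝ) (h : a + β + γ ≤ C) : (1:ℝ) ∈ stmt6rset q C a β γ := by
  refine ⟨⟨zero_le_one, le_refl 1⟩, ?_⟩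
  simp only [one_pow, Real.one_rpow, mul_one]
  linarith

lemma stmt6tmin_spec {q C a β γ : ℝ} (hq : 0 < q) (ha : 0 < a)
    (hγ : 0 ≤ γ) (hle : a + β + γ ≤ C) :
    0 < stmt6tmin q C a β γ ∧ stmt6tmin q C a β γ ≤ 1 ∧
      C * (stmt6tmin q C a β γ) ^ q = a + β * (stmt6tmin q C a β γ) ^ 2 + γ := by
  have hne : (stmt6rset q C a β γ).Nonempty := ⟨1, stmt6one_mem q C a β γ hle⟩
  have hbdd := stmt6rset_bddBelow q C a β γ
  have hcont : Continuous fun t : ℝ => C * t ^ q :=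
    continuous_const.mul (continuous_iff_continuousAt.mpr fun x =>
      Real.continuousAt_rpow_const x q (Or.inr hq.le))
  have hclosed : IsClosed (stmt6rset q C a β γ) := by
    have hrw : stmt6rset q C a β γ
        = Set.Icc 0 1 ∩ {t : ℝ | a + β * t ^ 2 + γ ≤ C * t ^ q} := rfl
    rw [hrw]
    exact isClosed_Icc.inter (isClosed_le (by continuity) hcont)
  have hmem : stmt6tmin q C a β γ ∈ stmt6rset q C a β γ := hclosed.csInf_mem hne hbdd
  set T := stmt6tmin q C a β γ with hT
  have hT1 : T ≤ 1 := csInf_le hbdd (stmt6one_mem q C a β γ hle)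
  have hT0 : 0 < T := by
    rcases lt_or_eq_of_le hmem.1.1 with h | h
    · exact h
    · exfalso
      have h2 := hmem.2
      rw [← h, Real.zero_rpow (ne_of_gt hq)] at h2
      nlinarith
  refine ⟨hT0, hT1, ?_⟩
  have hge : a + β * T ^ 2 + γ ≤ C * T ^ q := hmem.2
  by_contra hne'
  have hlt : 0 < C * T ^ q - (a + β * T ^ 2 + γ) := by
    rcases lt_or_eq_of_le hge with h | h
    · linarith
    · exact absurd h.symm hne'
  have hcont2 : Continuous fun t : ℝ => C * t ^ q - (a + β * t ^ 2 + γ) :=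
    hcont.sub (by continuity)
  have hev : ∀ᶠ s in 𝓝 T, 0 < C * s ^ q - (a + β * s ^ 2 + γ) :=
    hcont2.continuousAt.eventually (eventually_gt_nhds hlt)
  have hev2 : ∀ᶠ s in 𝓝 T, 0 < s := eventually_gt_nhds hT0
  have hev3 : ∀ᶠ s in 𝓝[<] T,
      ((0 < C * s ^ q - (a + β * s ^ 2 + γ)) ∧ 0 < s) ∧ s ∈ Set.Iio T :=
    ((hev.and hev2).filter_mono nhdsWithin_le_nhds).and eventually_mem_nhdsWithin
  obtain ⟨s, ⟨hs1, hs2⟩, hs3⟩ := hev3.exists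
  have hsT : s < T := hs3
  have hsmem : s ∈ stmt6rset q C a β γ :=
    ⟨⟨le_of_lt hs2, le_of_lt (lt_of_lt_of_le hsT hT1)⟩, by linarith⟩
  have hTs : T ≤ s := csInf_le hbdd hsmem
  linarith

lemma stmt6tmin_mono {q C a β γ γ' : ℝ} (hγγ' : γ ≤ γ') (hle' : a + β + γ' ≤ C) :
    stmt6tmin q C a β γ ≤ stmt6tmin q C a β γ' := by
  apply csInf_le_csInf (stmt6rset_bddBelow q C a β γ) ⟨1, stmt6one_mem q C a β γ' hle'⟩
  intro t ht
  exact ⟨ht.1, le_trans (by linarith) ht.2⟩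


/-- existence part of Lemma 2.3 in scalar form. For `2 < p < 4`, `b ≥ 0`,
and data `aᵢ > 0`, `cᵢ > 0`, `dᵢ ≥ 0` with `(4-p) cᵢ < 2 aᵢ` and
`aᵢ + b dᵢ² + b dᵢ ∑_{j≠i} dⱼ ≤ cᵢ`, there is a tuple `(t̂₁,…,t̂_{k+1})` with
`0 < t̂ᵢ ≤ 1` solving the Nehari system with the strict `N_k⁻` constraints. -/
theorem stmt_6 (p : ℝ) (hp2 : 2 < p) (hp4 : p < 4) (k : ℕ) (b : ℝ) (hb : 0 ≤ b)
    (a c d : Fin (k + 1) → ℝ)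
    (ha : ∀ i, 0 < a i) (hc : ∀ i, 0 < c i) (hd : ∀ i, 0 ≤ d i)
    (hcon : ∀ i, (4 - p) * c i < 2 * a i)
    (hle : ∀ i, a i + b * d i ^ 2 + b * d i * (∑ j ∈ Finset.univ.erase i, d j) ≤ c i) :
    ∃ t : Fin (k + 1) → ℝ, (∀ i, 0 < t i ∧ t i ≤ 1) ∧
      ∀ i, t i ^ 2 * a i + b * t i ^ 4 * d i ^ 2 +
            b * t i ^ 2 * d i * (∑ j ∈ Finset.univ.erase i, t j ^ 2 * d j) = t i ^ p * c i ∧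
        (4 - p) * (t i ^ p * c i) < 2 * (t i ^ 2 * a i) := by
  have hq : 0 < p - 2 := by linarith
  -- the clamped coupling term
  set γf : (Fin (k + 1) → ℝ) → Fin (k + 1) → ℝ :=
    fun x i => b * d i * (∑ j ∈ Finset.univ.erase i, min (d j) (max 0 (x j))) with hγf
  have hγnn : ∀ x i, 0 ≤ γf x i := by
    intro x i
    apply mul_nonneg (mul_nonneg hb (hd i))
    exact Finset.sum_nonneg fun j _ => le_min (hd j) (le_max_left 0 (x j))
  have hγle : ∀ x i, a i + b * d i ^ 2 + γf x i ≤ c i := by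
    intro x i
    have h1 : γf x i ≤ b * d i * (∑ j ∈ Finset.univ.erase i, d j) := by
      apply mul_le_mul_of_nonneg_left _ (mul_nonneg hb (hd i))
      exact Finset.sum_le_sum fun j _ => min_le_left _ _
    linarith [hle i]
  have hγmono : ∀ x y : Fin (k + 1) → ℝ, (∀ j, x j ≤ y j) → ∀ i, γf x i ≤ γf y i := by
    intro x y hxy i
    apply mul_le_mul_of_nonneg_left _ (mul_nonneg hb (hd i))
    exact Finset.sum_le_sum fun j _ => min_le_min le_rfl (max_le_max le_rfl (hxy j))
  -- the iteration map
  set τ : (Fin (k + 1) → ℝ) → Fin (k + 1) → ℝ :=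
    fun x i => stmt6tmin (p - 2) (c i) (a i) (b * d i ^ 2) (γf x i) with hτ
  have hτspec : ∀ x i, 0 < τ x i ∧ τ x i ≤ 1 ∧
      c i * (τ x i) ^ (p - 2) = a i + b * d i ^ 2 * (τ x i) ^ 2 + γf x i :=
    fun x i => stmt6tmin_spec hq (ha i) (hγnn x i) (hγle x i)
  set F : (Fin (k + 1) → ℝ) → Fin (k + 1) → ℝ := fun x i => (τ x i) ^ 2 * d i with hF
  have hFnn : ∀ x i, 0 ≤ F x i := fun x i => mul_nonneg (sq_nonneg _) (hd i)
  have hFled : ∀ x i, F x i ≤ d i := by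
    intro x i
    have hts := hτspec x i
    calc (τ x i) ^ 2 * d i ≤ 1 * d i := by
          apply mul_le_mul_of_nonneg_right _ (hd i)
          exact pow_le_one₀ hts.1.le hts.2.1
      _ = d i := one_mul _
  have hFmono : ∀ x y : Fin (k + 1) → ℝ, (∀ j, x j ≤ y j) → ∀ i, F x i ≤ F y i := by
    intro x y hxy i
    have hττ : τ x i ≤ τ y i := stmt6tmin_mono (hγmono x y hxy i) (hγle y i)
    exact mul_le_mul_of_nonneg_right
      (pow_le_pow_left₀ (hτspec x i).1.le hττ 2) (hd i)
  -- Tarski fixed point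
  set P : Set (Fin (k + 1) → ℝ) := {x | ∀ i, 0 ≤ x i ∧ x i ≤ F x i} with hP
  have hP0 : (fun _ => (0:ℝ)) ∈ P := fun i => ⟨le_refl 0, hFnn _ i⟩
  set xs : Fin (k + 1) → ℝ := fun i => sSup ((fun x => x i) '' P) with hxs
  have hbddA : ∀ i, BddAbove ((fun x : Fin (k+1) → ℝ => x i) '' P) := by
    intro i
    refine ⟨d i, ?_⟩
    rintro y ⟨x, hx, rfl⟩
    exact le_trans (hx i).2 (hFled x i)
  have hAne : ∀ i, ((fun x : Fin (k+1) → ℝ => x i) '' P).Nonempty :=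
    fun i => ⟨0, ⟨fun _ => 0, hP0, rfl⟩⟩
  have hub : ∀ x ∈ P, ∀ i, x i ≤ xs i := by
    intro x hx i
    exact le_csSup (hbddA i) ⟨x, hx, rfl⟩
  have hxsF : ∀ i, xs i ≤ F xs i := by
    intro i
    apply csSup_le (hAne i)
    rintro y ⟨x, hx, rfl⟩
    exact le_trans (hx i).2 (hFmono x xs (hub x hx) i)
  have hFP : F xs ∈ P := fun i => ⟨hFnn _ i, hFmono xs (F xs) hxsF i⟩
  have hfix : ∀ i, xs i = F xs i := fun i => le_antisymm (hxsF i) (hub _ hFP i)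
  -- conclusion
  refine ⟨τ xs, fun i => ⟨(hτspec xs i).1, (hτspec xs i).2.1⟩, fun i => ?_⟩
  set t : Fin (k + 1) → ℝ := τ xs with ht
  have htpos : ∀ j, 0 < t j := fun j => (hτspec xs j).1
  have htle1 : ∀ j, t j ≤ 1 := fun j => (hτspec xs j).2.1
  have hxseq : ∀ j, xs j = t j ^ 2 * d j := fun j => hfix j
  have hγval : γf xs i = b * d i * (∑ j ∈ Finset.univ.erase i, t j ^ 2 * d j) := by
    show b * d i * (∑ j ∈ Finset.univ.erase i, min (d j) (max 0 (xs j)))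
        = b * d i * (∑ j ∈ Finset.univ.erase i, t j ^ 2 * d j)
    congr 1
    apply Finset.sum_congr rfl
    intro j _
    rw [hxseq j]
    rw [max_eq_right (mul_nonneg (sq_nonneg _) (hd j))]
    exact min_eq_right (by
      calc t j ^ 2 * d j ≤ 1 * d j :=
            mul_le_mul_of_nonneg_right (pow_le_one₀ (htpos j).le (htle1 j)) (hd j)
        _ = d j := one_mul _)
  have hkey : c i * (t i) ^ (p - 2)
      = a i + b * d i ^ 2 * (t i) ^ 2 + b * d i * (∑ j ∈ Finset.univ.erase i, t j ^ 2 * d j) := by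
    rw [← hγval]; exact (hτspec xs i).2.2
  have hsplit : t i ^ p = t i ^ (2:ℕ) * t i ^ (p - 2) := by
    rw [← Real.rpow_natCast (t i) 2, ← Real.rpow_add (htpos i)]
    norm_num
  constructor
  · rw [hsplit]
    linear_combination (-(t i) ^ 2) * hkey
  · have hple : t i ^ p ≤ t i ^ (2:ℕ) := by
      rw [hsplit]
      calc t i ^ (2:ℕ) * t i ^ (p - 2) ≤ t i ^ (2:ℕ) * 1 :=
            mul_le_mul_of_nonneg_left
              (Real.rpow_le_one (htpos i).le (htle1 i) hq.le) (sq_nonneg _)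
        _ = t i ^ (2:ℕ) := mul_one _
    have h2 : 0 < t i ^ (2:ℕ) := pow_pos (htpos i) 2
    calc (4 - p) * (t i ^ p * c i) ≤ (4 - p) * (t i ^ 2 * c i) := by
          apply mul_le_mul_of_nonneg_left _ (by linarith)
          exact mul_le_mul_of_nonneg_right hple (hc i).le
      _ < 2 * (t i ^ 2 * a i) := by nlinarith [mul_lt_mul_of_pos_left (hcon i) h2]
end

section
/- Let $p$ be a real number with $2 < p < 4$, let $k \ge 0$ be an integer, and let $b \ge 0$. Suppose for each $i \in \{1, \dots, k+1\}$ we are given real numbers $a_i > 0$, $c_i > 0$, $d_i \ge 0$ satisfying $(4-p) c_i < 2 a_i$ and the exact equalities $a_i + b d_i^2 + b d_i \sum_{j \ne i} d_j = c_i$. If $(s_1, \dots, s_{k+1})$ is any tuple of positive real numbers such that for each $i$: $s_i^2 a_i + b s_i^4 d_i^2 + b s_i^2 d_i \sum_{j \ne i} s_j^2 d_j = s_i^p c_i$ and $(4-p) s_i^p c_i < 2 s_i^2 a_i$, then $s_i = 1$ for every $i$. -/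
private lemma bern (x r : ℝ) (hx : 0 ≤ x) (hr0 : 0 ≤ r) (hr1 : r ≤ 1) :
    x ^ r ≤ 1 + r * (x - 1) := by
  have h := Real.geom_mean_le_arith_mean2_weighted hr0 (by linarith : (0:ℝ) ≤ 1 - r)
    hx zero_le_one (by ring)
  rw [Real.one_rpow, mul_one] at h
  linarith

/-- For `S > 1`: from `S^p c ≤ S²a + S⁴(c-a)` and the scaled constraint, contradiction. -/
private lemma keymax (p A C S : ℝ) (hp2 : 2 < p) (hp4 : p < 4) (hA : 0 < A) (hC : 0 < C)
    (hS : 1 < S) (h2 : S ^ p * C ≤ S ^ 2 * A + S ^ 4 * (C - A))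
    (hscon : (4 - p) * (S ^ p * C) < 2 * (S ^ 2 * A)) : False := by
  have hS0 : (0:ℝ) < S := by linarith
  have hP : (0:ℝ) < S ^ p := Real.rpow_pos_of_pos hS0 p
  -- S^4 = S^p * S^(4-p)
  have h4 : (S : ℝ) ^ (4:ℕ) = S ^ p * S ^ (4 - p) := by
    rw [← Real.rpow_add hS0]
    rw [show p + (4 - p) = ((4:ℕ):ℝ) by norm_num, Real.rpow_natCast]
  -- Bernoulli with x = S^2, r = (4-p)/2
  have hb : S ^ (4 - p) ≤ 1 + (4 - p) / 2 * (S ^ 2 - 1) := by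
    have := bern (S ^ 2) ((4 - p) / 2) (by positivity) (by linarith) (by linarith)
    calc S ^ (4 - p) = (S ^ (2:ℕ)) ^ ((4 - p) / 2) := by
          rw [← Real.rpow_natCast S 2, ← Real.rpow_mul hS0.le]
          congr 1
          ring
      _ ≤ 1 + (4 - p) / 2 * (S ^ 2 - 1) := this
  -- chain: A*S^2*(S^2-1) ≤ C*(S^4 - S^p) = C*S^p*(S^(4-p)-1) ≤ C*S^p*(4-p)/2*(S^2-1)
  --        < A*S^2*(S^2-1)
  have hs21 : (0:ℝ) < S ^ 2 - 1 := by nlinarith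
  nlinarith [mul_le_mul_of_nonneg_left hb (mul_pos hC hP).le,
    mul_lt_mul_of_pos_right hscon hs21, mul_pos hA hP]

/-- For `0 < S < 1`: from `S²a + S⁴(c-a) ≤ S^p c` and the unscaled constraint, contradiction. -/
private lemma keymin (p A C S : ℝ) (hp2 : 2 < p) (hp4 : p < 4) (hA : 0 < A) (hC : 0 < C)
    (hS0 : 0 < S) (hS : S < 1) (h2 : S ^ 2 * A + S ^ 4 * (C - A) ≤ S ^ p * C)
    (hcon : (4 - p) * C < 2 * A) : False := by
  -- S^p = S^2 * S^(p-2)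
  have hsp : (S : ℝ) ^ p = S ^ (2:ℕ) * S ^ (p - 2) := by
    rw [← Real.rpow_natCast S 2, ← Real.rpow_add hS0]
    norm_num
  have hb : S ^ (p - 2) ≤ 1 + (p - 2) / 2 * (S ^ 2 - 1) := by
    have := bern (S ^ 2) ((p - 2) / 2) (by positivity) (by linarith) (by linarith)
    calc S ^ (p - 2) = (S ^ (2:ℕ)) ^ ((p - 2) / 2) := by
          rw [← Real.rpow_natCast S 2, ← Real.rpow_mul hS0.le]
          congr 1
          ring
      _ ≤ 1 + (p - 2) / 2 * (S ^ 2 - 1) := this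
  have hs2 : (0:ℝ) < S ^ 2 := by positivity
  have hs21 : (0:ℝ) < 1 - S ^ 2 := by nlinarith
  -- chain: A*S^2*(1-S^2) ≤ C*(S^p - S^4) = C*S^2*(S^(p-2) - S^2)
  --        ≤ C*S^2*(1-(p-2)/2)*(1-S^2) < A*S^2*(1-S^2)
  rw [hsp] at h2
  nlinarith [mul_le_mul_of_nonneg_left hb (mul_pos hC hs2).le,
    mul_lt_mul_of_pos_right hcon (mul_pos hs2 hs21)]

/-- uniqueness part of Lemma 2.3 (equation (2.25)) in scalar form.
For `2 < p < 4`, `b ≥ 0`, and data `aᵢ > 0`, `cᵢ > 0`, `dᵢ ≥ 0` with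
`(4-p) cᵢ < 2 aᵢ` and the exact Nehari equalities
`aᵢ + b dᵢ² + b dᵢ ∑_{j≠i} dⱼ = cᵢ`, any positive tuple `(s₁,…,s_{k+1})` solving the
rescaled Nehari system with the strict constraints must be `(1,…,1)`. -/
theorem stmt_7 (p : ℝ) (hp2 : 2 < p) (hp4 : p < 4) (k : ℕ) (b : ℝ) (hb : 0 ≤ b)
    (a c d : Fin (k + 1) → ℝ)
    (ha : ∀ i, 0 < a i) (hc : ∀ i, 0 < c i) (hd : ∀ i, 0 ≤ d i)
    (hcon : ∀ i, (4 - p) * c i < 2 * a i)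
    (heq : ∀ i, a i + b * d i ^ 2 + b * d i * (∑ j ∈ Finset.univ.erase i, d j) = c i)
    (s : Fin (k + 1) → ℝ) (hs : ∀ i, 0 < s i)
    (hseq : ∀ i, s i ^ 2 * a i + b * s i ^ 4 * d i ^ 2 +
        b * s i ^ 2 * d i * (∑ j ∈ Finset.univ.erase i, s j ^ 2 * d j) = s i ^ p * c i)
    (hscon : ∀ i, (4 - p) * (s i ^ p * c i) < 2 * (s i ^ 2 * a i)) :
    ∀ i, s i = 1 := by
  obtain ⟨iM, hiM⟩ := Finite.exists_max s
  obtain ⟨im, him⟩ := Finite.exists_min s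
  -- the max is ≤ 1
  have hmax : s iM ≤ 1 := by
    by_contra h
    push_neg at h
    have hsum : ∑ j ∈ Finset.univ.erase iM, s j ^ 2 * d j ≤
        s iM ^ 2 * ∑ j ∈ Finset.univ.erase iM, d j := by
      rw [Finset.mul_sum]
      refine Finset.sum_le_sum fun j _ => ?_
      have : s j ^ 2 ≤ s iM ^ 2 := by nlinarith [hiM j, (hs j).le]
      exact mul_le_mul_of_nonneg_right this (hd j)
    have hmul : b * s iM ^ 2 * d iM * (∑ j ∈ Finset.univ.erase iM, s j ^ 2 * d j) ≤
        b * s iM ^ 2 * d iM * (s iM ^ 2 * ∑ j ∈ Finset.univ.erase iM, d j) :=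
      mul_le_mul_of_nonneg_left hsum (mul_nonneg (mul_nonneg hb (sq_nonneg _)) (hd iM))
    have h2 : s iM ^ p * c iM ≤ s iM ^ 2 * a iM + s iM ^ 4 * (c iM - a iM) := by
      have heq4 : s iM ^ 4 * (c iM - a iM) =
          s iM ^ 4 * (b * d iM ^ 2) + b * s iM ^ 2 * d iM * (s iM ^ 2 * ∑ j ∈ Finset.univ.erase iM, d j) := by
        rw [show c iM - a iM = b * d iM ^ 2 + b * d iM * (∑ j ∈ Finset.univ.erase iM, d j) from by
          rw [← heq iM]; ring]
        ring
      linarith [hseq iM]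
    exact keymax p (a iM) (c iM) (s iM) hp2 hp4 (ha iM) (hc iM) h h2 (hscon iM)
  -- the min is ≥ 1
  have hmin : 1 ≤ s im := by
    by_contra h
    push_neg at h
    have hsum : s im ^ 2 * ∑ j ∈ Finset.univ.erase im, d j ≤
        ∑ j ∈ Finset.univ.erase im, s j ^ 2 * d j := by
      rw [Finset.mul_sum]
      refine Finset.sum_le_sum fun j _ => ?_
      have : s im ^ 2 ≤ s j ^ 2 := by nlinarith [him j, (hs im).le]
      exact mul_le_mul_of_nonneg_right this (hd j)
    have hmul : b * s im ^ 2 * d im * (s im ^ 2 * ∑ j ∈ Finset.univ.erase im, d j) ≤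
        b * s im ^ 2 * d im * (∑ j ∈ Finset.univ.erase im, s j ^ 2 * d j) :=
      mul_le_mul_of_nonneg_left hsum (mul_nonneg (mul_nonneg hb (sq_nonneg _)) (hd im))
    have h2 : s im ^ 2 * a im + s im ^ 4 * (c im - a im) ≤ s im ^ p * c im := by
      have heq4 : s im ^ 4 * (c im - a im) =
          s im ^ 4 * (b * d im ^ 2) + b * s im ^ 2 * d im * (s im ^ 2 * ∑ j ∈ Finset.univ.erase im, d j) := by
        rw [show c im - a im = b * d im ^ 2 + b * d im * (∑ j ∈ Finset.univ.erase im, d j) from by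
          rw [← heq im]; ring]
        ring
      linarith [hseq im]
    exact keymin p (a im) (c im) (s im) hp2 hp4 (ha im) (hc im) (hs im) h h2 (hcon im)
  intro i
  have := hiM i
  have := him i
  linarith
end

section
/- Let $p$ be a real number with $2 < p < 4$, let $k \ge 0$ be an integer, and let $b \ge 0$. Suppose for each $i \in \{1, \dots, k+1\}$ we are given real numbers $a_i > 0$, $c_i > 0$, $d_i \ge 0$ satisfying $(4-p) c_i < 2 a_i$ and $a_i + b d_i^2 + b d_i \sum_{j \ne i} d_j \le c_i$. Define $\varphi(t_1, \dots, t_{k+1}) := \frac{1}{2}\sum_{i} t_i^2 a_i + \frac{b}{4}\left(\sum_{i} t_i^2 d_i\right)^2 - \frac{1}{p}\sum_{i} t_i^p c_i$ for $t_i \ge 0$. Then there exists $(\widehat{t}_1, \dots, \widehat{t}_{k+1}) \in (0,1]^{k+1}$ satisfying, for each $i$, $\widehat{t}_i^2 a_i + b \widehat{t}_i^4 d_i^2 + b \widehat{t}_i^2 d_i \sum_{j \ne i} \widehat{t}_j^2 d_j = \widehat{t}_i^p c_i$, and any such tuple achieves the maximum: $\varphi(\widehat{t}_1, \dots, \widehat{t}_{k+1})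 = \max\{\varphi(t_1, \dots, t_{k+1}) : 0 \le t_i \le 1 \text{ for } i = 1, \dots, k+1\}$. -/
open Real Finset

private lemma monoq {q u v : ℝ} (hq0 : 0 < q) (hq1 : q ≤ 1) (hv0 : 0 ≤ v) (hvu : v ≤ u)
    (hu1 : u ≤ 1) : q * (u - v) ≤ u ^ q - v ^ q := by
  rcases eq_or_lt_of_le hvu with rfl | hvu
  · simp
  have hu0 : 0 < u := lt_of_le_of_lt hv0 hvu
  -- tangent-line bound at u
  have hs : -1 ≤ v / u - 1 := by
    have : 0 ≤ v / u := div_nonneg hv0 hu0.le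
    linarith
  have hber := rpow_one_add_le_one_add_mul_self hs hq0.le hq1
  have h1s : 1 + (v / u - 1) = v / u := by ring
  rw [h1s] at hber
  -- v ^ q = u ^ q * (v/u) ^ q
  have hvq : v ^ q = u ^ q * (v / u) ^ q := by
    rw [← Real.mul_rpow hu0.le (div_nonneg hv0 hu0.le), mul_div_cancel₀ _ hu0.ne']
  have huq : u ^ q = u ^ (q - 1) * u := by
    rw [← Real.rpow_add_one hu0.ne']; ring_nf
  have hw : 1 ≤ u ^ (q - 1) := by
    have := Real.rpow_le_rpow_of_exponent_ge hu0 hu1 (show q - 1 ≤ 0 by linarith)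
    simpa using this
  have huqpos : 0 < u ^ q := Real.rpow_pos_of_pos hu0 q
  have h1 : v ^ q ≤ u ^ q + q * u ^ (q - 1) * (v - u) := by
    have h2 := mul_le_mul_of_nonneg_left hber huqpos.le
    rw [← hvq] at h2
    calc v ^ q ≤ u ^ q * (1 + q * (v / u - 1)) := h2
      _ = u ^ q + q * u ^ (q - 1) * (v - u) := by
          rw [huq]; field_simp
  nlinarith [mul_le_mul_of_nonneg_left hw (mul_nonneg hq0.le (sub_nonneg.2 hvu.le))]

private lemma core1d {q : ℝ} (hq0 : 0 < q) (hq1 : q < 1) {v : ℝ} (hv0 : 0 < v) (hv1 : v ≤ 1)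
    {u : ℝ} (hu0 : 0 ≤ u) (hu1 : u ≤ 1) :
    q / 4 * (u - v) ^ 2 ≤
      1 / (2 * (q + 1)) * (u ^ (q + 1) - v ^ (q + 1)) - 1 / 2 * v ^ q * (u - v) := by
  set G : ℝ → ℝ := fun w => 1 / (2 * (q + 1)) * w ^ (q + 1) - 1 / 2 * v ^ q * w
      - q / 4 * (w - v) ^ 2 with hGdef
  have hq1' : (1 : ℝ) ≤ q + 1 := by linarith
  have hG : ∀ w : ℝ, HasDerivAt G (1 / 2 * w ^ q - 1 / 2 * v ^ q - q / 2 * (w - v)) w := by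
    intro w
    have h1 : HasDerivAt (fun x : ℝ => x ^ (q + 1)) ((q + 1) * w ^ q) w := by
      have := Real.hasDerivAt_rpow_const (x := w) (p := q + 1) (Or.inr hq1')
      simpa [add_sub_cancel_right] using this
    have h2 : HasDerivAt (fun x : ℝ => (x - v) ^ 2) (2 * (w - v)) w := by
      have := (hasDerivAt_pow 2 (w - v)).comp w ((hasDerivAt_id w).sub_const v)
      simpa [Function.comp_def] using this
    have h3 := ((h1.const_mul (1 / (2 * (q + 1)))).sub
        ((hasDerivAt_id w).const_mul (1 / 2 * v ^ q))).sub (h2.const_mul (q / 4))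
    refine h3.congr_deriv ?_
    field_simp [show q + 1 ≠ 0 by linarith]
    ring
  have hdiff : Differentiable ℝ G := fun w => (hG w).differentiableAt
  have hkey : G v ≤ G u := by
    rcases le_total v u with h | h
    · have hmono : MonotoneOn G (Set.Icc v 1) := by
        apply monotoneOn_of_deriv_nonneg (convex_Icc v 1) hdiff.continuous.continuousOn
          (hdiff.differentiableOn)
        intro w hw
        rw [interior_Icc] at hw
        rw [(hG w).deriv]
        have := monoq hq0 hq1.le hv0.le hw.1.le hw.2.le
        linarith
      exact hmono ⟨le_refl v, hv1⟩ ⟨h, hu1⟩ h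
    · have hanti : AntitoneOn G (Set.Icc 0 v) := by
        apply antitoneOn_of_deriv_nonpos (convex_Icc 0 v) hdiff.continuous.continuousOn
          (hdiff.differentiableOn)
        intro w hw
        rw [interior_Icc] at hw
        rw [(hG w).deriv]
        have := monoq hq0 hq1.le hw.1.le hw.2.le hv1
        linarith
      exact hanti ⟨hu0, h⟩ ⟨hv0.le, le_refl v⟩ h
  simp only [hGdef] at hkey
  nlinarith [hkey]

private lemma maxF {n : ℕ} {p b : ℝ} (hp2 : 2 < p) (hp4 : p < 4) (hb : 0 ≤ b)
    {a c d : Fin n → ℝ} (hc : ∀ i, 0 < c i) (hd : ∀ i, 0 ≤ d i)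
    (hkey : ∀ i, b * d i * (∑ j, d j) ≤ (p / 2 - 1) * c i)
    {x y : Fin n → ℝ} (hx : ∀ i, x i ∈ Set.Ioc (0 : ℝ) 1) (hy : ∀ i, y i ∈ Set.Icc (0 : ℝ) 1)
    (hN : ∀ i, a i + b * d i * (∑ j, x j * d j) = x i ^ (p / 2 - 1) * c i) :
    1 / 2 * (∑ i, y i * a i) + b / 4 * (∑ i, y i * d i) ^ 2 - 1 / p * (∑ i, y i ^ (p / 2) * c i) ≤
    1 / 2 * (∑ i, x i * a i) + b / 4 * (∑ i, x i * d i) ^ 2 - 1 / p * (∑ i, x i ^ (p / 2) * c i) := by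
  set q : ℝ := p / 2 - 1 with hqdef
  have hq0 : 0 < q := by simp only [hqdef]; linarith
  have hq1 : q < 1 := by simp only [hqdef]; linarith
  have hqp : q + 1 = p / 2 := by simp only [hqdef]; ring
  have hp0 : (0:ℝ) < p := by linarith
  set X : ℝ := ∑ j, x j * d j with hXdef
  set Y : ℝ := ∑ j, y j * d j with hYdef
  -- termwise core inequality
  have E1 : ∑ i, q / 4 * (c i * (y i - x i) ^ 2) ≤
      ∑ i, (1 / p * (y i ^ (p / 2) * c i) - 1 / p * (x i ^ (p / 2) * c i)
        - 1 / 2 * ((a i + b * d i * X) * (y i - x i))) := by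
    refine Finset.sum_le_sum fun i _ => ?_
    have hco := core1d hq0 hq1 (hx i).1 (hx i).2 (hy i).1 (hy i).2
    rw [hqp] at hco
    rw [show 1 / (2 * (p / 2)) = 1 / p by ring] at hco
    have h3 := mul_le_mul_of_nonneg_right hco (hc i).le
    rw [hN i]
    nlinarith [h3]
  -- expand the right-hand sum
  have E2 : ∑ i, (a i + b * d i * X) * (y i - x i) =
      (∑ i, y i * a i) - (∑ i, x i * a i) + b * X * Y - b * X * X := by
    have h : ∀ i ∈ Finset.univ (α := Fin n), (a i + b * d i * X) * (y i - x i) =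
        (y i * a i - x i * a i) + (b * X * (y i * d i) - b * X * (x i * d i)) := by
      intro i _; ring
    rw [Finset.sum_congr rfl h, Finset.sum_add_distrib, Finset.sum_sub_distrib,
      Finset.sum_sub_distrib, ← Finset.mul_sum, ← Finset.mul_sum, ← hXdef, ← hYdef]
    ring
  have E5 : ∑ i, (1 / p * (y i ^ (p / 2) * c i) - 1 / p * (x i ^ (p / 2) * c i)
        - 1 / 2 * ((a i + b * d i * X) * (y i - x i))) =
      1 / p * (∑ i, y i ^ (p / 2) * c i) - 1 / p * (∑ i, x i ^ (p / 2) * c i)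
        - 1 / 2 * (∑ i, (a i + b * d i * X) * (y i - x i)) := by
    rw [Finset.sum_sub_distrib, Finset.sum_sub_distrib, ← Finset.mul_sum, ← Finset.mul_sum,
      ← Finset.mul_sum]
  rw [E5, E2] at E1
  -- Cauchy–Schwarz
  have E3 : (Y - X) ^ 2 ≤ (∑ i, d i) * ∑ i, d i * (y i - x i) ^ 2 := by
    have hcs := Finset.sum_mul_sq_le_sq_mul_sq Finset.univ (fun i => Real.sqrt (d i))
      (fun i => Real.sqrt (d i) * (y i - x i))
    have h1 : ∀ i ∈ Finset.univ (α := Fin n),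
        Real.sqrt (d i) * (Real.sqrt (d i) * (y i - x i)) = d i * (y i - x i) := by
      intro i _; rw [← mul_assoc, Real.mul_self_sqrt (hd i)]
    have h2 : ∀ i ∈ Finset.univ (α := Fin n), Real.sqrt (d i) ^ 2 = d i := by
      intro i _; exact Real.sq_sqrt (hd i)
    have h3 : ∀ i ∈ Finset.univ (α := Fin n),
        (Real.sqrt (d i) * (y i - x i)) ^ 2 = d i * (y i - x i) ^ 2 := by
      intro i _; rw [mul_pow, Real.sq_sqrt (hd i)]
    rw [Finset.sum_congr rfl h1, Finset.sum_congr rfl h2, Finset.sum_congr rfl h3] at hcs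
    have h4 : ∑ i, d i * (y i - x i) = Y - X := by
      have h : ∀ i ∈ Finset.univ (α := Fin n),
          d i * (y i - x i) = y i * d i - x i * d i := by intro i _; ring
      rw [Finset.sum_congr rfl h, Finset.sum_sub_distrib, ← hXdef, ← hYdef]
    rw [h4] at hcs
    exact hcs
  have E4 : b / 4 * (Y - X) ^ 2 ≤ ∑ i, q / 4 * (c i * (y i - x i) ^ 2) := by
    calc b / 4 * (Y - X) ^ 2 ≤ b / 4 * ((∑ i, d i) * ∑ i, d i * (y i - x i) ^ 2) := by
          apply mul_le_mul_of_nonneg_left E3 (by positivity)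
      _ = ∑ i, b / 4 * (∑ j, d j) * (d i * (y i - x i) ^ 2) := by
          rw [Finset.mul_sum, Finset.mul_sum]
          refine Finset.sum_congr rfl fun i _ => by ring
      _ ≤ ∑ i, q / 4 * (c i * (y i - x i) ^ 2) := by
          refine Finset.sum_le_sum fun i _ => ?_
          have h := mul_le_mul_of_nonneg_right (hkey i) (sq_nonneg (y i - x i))
          have e1 : b / 4 * (∑ j, d j) * (d i * (y i - x i) ^ 2)
              = 1 / 4 * ((b * d i * ∑ j, d j) * (y i - x i) ^ 2) := by ring
          have e2 : q / 4 * (c i * (y i - x i) ^ 2)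
              = 1 / 4 * (q * c i * (y i - x i) ^ 2) := by ring
          rw [e1, e2]
          exact mul_le_mul_of_nonneg_left h (by norm_num)
  linarith [E1, E4]

private lemma sqp {w : ℝ} (hw : 0 ≤ w) (p : ℝ) : w ^ p = (w ^ (2:ℕ)) ^ (p / 2) := by
  rw [← Real.rpow_natCast_mul hw 2 (p / 2)]
  congr 1
  push_cast
  ring

/-- equation (2.22) of Lemma 2.3 in scalar form. With
`φ(t) = ½ ∑ tᵢ² aᵢ + (b/4) (∑ tᵢ² dᵢ)² - (1/p) ∑ tᵢ^p cᵢ`, there exists a tuple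
`t̂ ∈ (0,1]^{k+1}` satisfying the Nehari equalities, and any such tuple maximizes `φ`
over `[0,1]^{k+1}`. -/
theorem stmt_8 (p : ℝ) (hp2 : 2 < p) (hp4 : p < 4) (k : ℕ) (b : ℝ) (hb : 0 ≤ b)
    (a c d : Fin (k + 1) → ℝ)
    (ha : ∀ i, 0 < a i) (hc : ∀ i, 0 < c i) (hd : ∀ i, 0 ≤ d i)
    (hcon : ∀ i, (4 - p) * c i < 2 * a i)
    (hle : ∀ i, a i + b * d i ^ 2 + b * d i * (∑ j ∈ Finset.univ.erase i, d j) ≤ c i)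
    (φ : (Fin (k + 1) → ℝ) → ℝ)
    (hφ : ∀ t : Fin (k + 1) → ℝ,
      φ t = (1 / 2) * (∑ i, t i ^ 2 * a i) + (b / 4) * (∑ i, t i ^ 2 * d i) ^ 2 -
        (1 / p) * (∑ i, t i ^ p * c i)) :
    (∃ t : Fin (k + 1) → ℝ, (∀ i, t i ∈ Set.Ioc (0 : ℝ) 1) ∧
        ∀ i, t i ^ 2 * a i + b * t i ^ 4 * d i ^ 2 +
            b * t i ^ 2 * d i * (∑ j ∈ Finset.univ.erase i, t j ^ 2 * d j) = t i ^ p * c i) ∧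
      ∀ t : Fin (k + 1) → ℝ, (∀ i, t i ∈ Set.Ioc (0 : ℝ) 1) →
        (∀ i, t i ^ 2 * a i + b * t i ^ 4 * d i ^ 2 +
            b * t i ^ 2 * d i * (∑ j ∈ Finset.univ.erase i, t j ^ 2 * d j) = t i ^ p * c i) →
        IsMaxOn φ {s : Fin (k + 1) → ℝ | ∀ i, s i ∈ Set.Icc (0 : ℝ) 1} t := by
  have hp0 : (0:ℝ) < p := by linarith
  set q : ℝ := p / 2 - 1 with hqdef
  have hq0 : 0 < q := by simp only [hqdef]; linarith
  have hq1 : q < 1 := by simp only [hqdef]; linarith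
  set D : ℝ := ∑ j, d j with hDdef
  have hD0 : 0 ≤ D := Finset.sum_nonneg fun j _ => hd j
  have hDsplit : ∀ i : Fin (k+1), D = d i + ∑ j ∈ Finset.univ.erase i, d j := fun i =>
    (Finset.add_sum_erase _ _ (Finset.mem_univ i)).symm
  have hleD : ∀ i, a i + b * d i * D ≤ c i := by
    intro i
    have h1 := hle i
    rw [hDsplit i]
    nlinarith [h1]
  -- key coefficient bound
  have hkey : ∀ i, b * d i * D ≤ q * c i := by
    intro i
    have h1 := hleD i
    have h2 := hcon i
    have h3 : q * c i = (p / 2 - 1) * c i := by rw [hqdef]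
    rw [h3]
    nlinarith [h1, h2, ha i]
  -- Part A : existence via IVT
  have hbdX : ∀ (i : Fin (k+1)) (X : ℝ), 0 ≤ X → 0 < a i + b * d i * X := by
    intro i X hX
    have : 0 ≤ b * d i * X := mul_nonneg (mul_nonneg hb (hd i)) hX
    linarith [ha i]
  set f : ℝ → ℝ := fun X => ∑ j, d j * ((a j + b * d j * X) / c j) ^ (q⁻¹) with hfdef
  have hfc : Continuous f := by
    apply continuous_finset_sum
    intro j _
    exact continuous_const.mul ((Real.continuous_rpow_const (inv_nonneg.2 hq0.le)).comp
      ((continuous_const.add (continuous_const.mul continuous_id)).div_const (c j)))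
  have hf0 : 0 ≤ f 0 := by
    apply Finset.sum_nonneg
    intro j _
    exact mul_nonneg (hd j) (Real.rpow_nonneg (div_nonneg (hbdX j 0 le_rfl).le (hc j).le) _)
  have hfD : f D ≤ D := by
    rw [hDdef]
    apply Finset.sum_le_sum
    intro j _
    calc d j * ((a j + b * d j * D) / c j) ^ q⁻¹ ≤ d j * 1 := by
          apply mul_le_mul_of_nonneg_left _ (hd j)
          apply Real.rpow_le_one (div_nonneg (hbdX j D hD0).le (hc j).le) _ (inv_nonneg.2 hq0.le)
          rw [div_le_one (hc j)]
          exact hleD j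
      _ = d j := mul_one _
  obtain ⟨X₀, hX₀mem, hgX₀⟩ : ∃ X₀ ∈ Set.Icc 0 D, f X₀ - X₀ = 0 := by
    have hcont : ContinuousOn (fun X => f X - X) (Set.Icc 0 D) :=
      (hfc.sub continuous_id).continuousOn
    have := intermediate_value_Icc' hD0 hcont
    have hmem : (0:ℝ) ∈ Set.Icc ((fun X => f X - X) D) ((fun X => f X - X) 0) := by
      constructor
      · simp only; linarith
      · simp only; linarith
    obtain ⟨X₀, h1, h2⟩ := this hmem
    exact ⟨X₀, h1, h2⟩
  have hfX₀ : f X₀ = X₀ := by linarith [hgX₀]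
  have hX₀0 : 0 ≤ X₀ := hX₀mem.1
  set x : Fin (k+1) → ℝ := fun j => ((a j + b * d j * X₀) / c j) ^ (q⁻¹) with hxdef
  have hxpos : ∀ j, 0 < x j := fun j =>
    Real.rpow_pos_of_pos (div_pos (hbdX j X₀ hX₀0) (hc j)) _
  have hxle1 : ∀ j, x j ≤ 1 := by
    intro j
    apply Real.rpow_le_one (div_nonneg (hbdX j X₀ hX₀0).le (hc j).le) _ (inv_nonneg.2 hq0.le)
    rw [div_le_one (hc j)]
    have : b * d j * X₀ ≤ b * d j * D :=
      mul_le_mul_of_nonneg_left hX₀mem.2 (mul_nonneg hb (hd j))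
    linarith [hleD j]
  have hxq : ∀ j, x j ^ q = (a j + b * d j * X₀) / c j := fun j =>
    Real.rpow_inv_rpow (div_nonneg (hbdX j X₀ hX₀0).le (hc j).le) hq0.ne'
  have hXsum : ∑ j, x j * d j = X₀ := by
    rw [← hfX₀, hfdef]
    exact Finset.sum_congr rfl fun j _ => by rw [mul_comm]
  set t : Fin (k+1) → ℝ := fun j => Real.sqrt (x j) with htdef
  have ht2 : ∀ j, t j ^ 2 = x j := fun j => Real.sq_sqrt (hxpos j).le
  have htmem : ∀ j, t j ∈ Set.Ioc (0:ℝ) 1 := by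
    intro j
    constructor
    · exact Real.sqrt_pos.2 (hxpos j)
    · rw [show (1:ℝ) = Real.sqrt 1 by simp]
      exact Real.sqrt_le_sqrt (hxle1 j)
  have htp : ∀ j, t j ^ p = x j ^ (p / 2) := by
    intro j
    rw [sqp (Real.sqrt_nonneg (x j)) p, ht2]
  have hxp2 : ∀ j, x j ^ (p/2) = x j ^ q * x j := by
    intro j
    rw [show p / 2 = q + 1 by rw [hqdef]; ring, Real.rpow_add_one (hxpos j).ne']
  have htN : ∀ i, t i ^ 2 * a i + b * t i ^ 4 * d i ^ 2 +
      b * t i ^ 2 * d i * (∑ j ∈ Finset.univ.erase i, t j ^ 2 * d j) = t i ^ p * c i := by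
    intro i
    have hsum : ∑ j ∈ Finset.univ.erase i, t j ^ 2 * d j = X₀ - x i * d i := by
      have h1 : ∑ j ∈ Finset.univ.erase i, t j ^ 2 * d j
          = ∑ j ∈ Finset.univ.erase i, x j * d j :=
        Finset.sum_congr rfl fun j _ => by rw [ht2]
      have h2 : x i * d i + ∑ j ∈ Finset.univ.erase i, x j * d j = X₀ := by
        rw [← hXsum]
        exact Finset.add_sum_erase Finset.univ (fun j => x j * d j) (Finset.mem_univ i)
      rw [h1]; linarith
    have ht4 : t i ^ 4 = x i ^ 2 := by
      rw [show (4:ℕ) = 2 * 2 from rfl, pow_mul, ht2]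
    rw [hsum, ht2, ht4, htp, hxp2, hxq]
    have hcne := (hc i).ne'
    field_simp
    ring
  constructor
  · exact ⟨t, htmem, htN⟩
  -- Part B : any Nehari tuple maximizes
  intro u hu huN s hs
  simp only [Set.mem_setOf_eq] at hs
  set xx : Fin (k+1) → ℝ := fun i => u i ^ 2 with hxxdef
  set yy : Fin (k+1) → ℝ := fun i => s i ^ 2 with hyydef
  have hxx : ∀ i, xx i ∈ Set.Ioc (0:ℝ) 1 :=
    fun i => ⟨pow_pos (hu i).1 2, pow_le_one₀ (hu i).1.le (hu i).2⟩
  have hyy : ∀ i, yy i ∈ Set.Icc (0:ℝ) 1 :=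
    fun i => ⟨sq_nonneg _, pow_le_one₀ (hs i).1 (hs i).2⟩
  have hup : ∀ j, u j ^ p = xx j ^ (p / 2) := fun j => sqp (hu j).1.le p
  have hsp : ∀ j, s j ^ p = yy j ^ (p / 2) := fun j => sqp (hs j).1 p
  have hxxp2 : ∀ j, xx j ^ (p/2) = xx j ^ q * xx j := by
    intro j
    rw [show p / 2 = q + 1 by rw [hqdef]; ring, Real.rpow_add_one (hxx j).1.ne']
  have hNx : ∀ i, a i + b * d i * (∑ j, xx j * d j) = xx i ^ q * c i := by
    intro i
    have h1 := huN i
    have hsum : ∑ j, xx j * d j = xx i * d i + ∑ j ∈ Finset.univ.erase i, xx j * d j :=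
      (Finset.add_sum_erase Finset.univ (fun j => xx j * d j) (Finset.mem_univ i)).symm
    have hu4 : u i ^ 4 = xx i ^ 2 := by
      rw [hxxdef, show (4:ℕ) = 2 * 2 from rfl, pow_mul]
    have herase : ∑ j ∈ Finset.univ.erase i, u j ^ 2 * d j
        = ∑ j ∈ Finset.univ.erase i, xx j * d j := rfl
    rw [herase, hu4, hup, hxxp2] at h1
    have hxi : xx i ≠ 0 := (hxx i).1.ne'
    apply mul_left_cancel₀ hxi
    rw [hsum]
    calc xx i * (a i + b * d i * (xx i * d i + ∑ j ∈ Finset.univ.erase i, xx j * d j))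
        = xx i * a i + b * xx i ^ 2 * d i ^ 2 +
          b * xx i * d i * (∑ j ∈ Finset.univ.erase i, xx j * d j) := by ring
      _ = xx i ^ q * xx i * c i := h1
      _ = xx i * (xx i ^ q * c i) := by ring
  have key := maxF (a := a) (c := c) (d := d) hp2 hp4 hb hc hd
    (by intro i; rw [show p / 2 - 1 = q from rfl]; exact hkey i)
    (x := xx) (y := yy) hxx hyy
    (by intro i; rw [show (p / 2 - 1 : ℝ) = q from rfl]; exact hNx i)
  show φ s ≤ φ u
  rw [hφ s, hφ u]
  have es1 : ∑ i, s i ^ 2 * a i = ∑ i, yy i * a i := rfl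
  have es2 : ∑ i, s i ^ 2 * d i = ∑ i, yy i * d i := rfl
  have es3 : ∑ i, s i ^ p * c i = ∑ i, yy i ^ (p/2) * c i :=
    Finset.sum_congr rfl fun j _ => by rw [hsp]
  have eu1 : ∑ i, u i ^ 2 * a i = ∑ i, xx i * a i := rfl
  have eu2 : ∑ i, u i ^ 2 * d i = ∑ i, xx i * d i := rfl
  have eu3 : ∑ i, u i ^ p * c i = ∑ i, xx i ^ (p/2) * c i :=
    Finset.sum_congr rfl fun j _ => by rw [hup]
  rw [es1, es2, es3, eu1, eu2, eu3]
  exact key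
end

section
/- Let $p$ be a real number with $2 < p < 4$ and let $a, c, B > 0$ be real numbers satisfying $a + B = c$ and $(4-p) c < 2 a$. Define $\phi(t) := t^2 a + t^4 B - t^p c$ for $t > 0$ and set $T := \left(\frac{2a}{(4-p)c}\right)^{1/(p-2)}$. Then $T > 1$ and there exists $s > T$ such that $\phi(s) = 0$, and the sign pattern holds: $\phi(t) \ge 0$ for $0 < t \le 1$, $\phi(t) \le 0$ for $1 \le t \le s$, and $\phi(t) \ge 0$ for $t \ge s$. -/
/-- the sign pattern (2.27). For `2 < p < 4`, `a, c, B > 0` with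
`a + B = c` and `(4-p) c < 2 a`, the function `φ(t) = t² a + t⁴ B - t^p c` satisfies:
`T = (2a/((4-p)c))^(1/(p-2)) > 1`, there is `s > T` with `φ(s) = 0`, and
`φ ≥ 0` on `(0,1]`, `φ ≤ 0` on `[1,s]`, `φ ≥ 0` on `[s,∞)`. -/
theorem stmt_9 (p a c B : ℝ) (hp2 : 2 < p) (hp4 : p < 4)
    (ha : 0 < a) (hc : 0 < c) (hB : 0 < B)
    (heq : a + B = c) (hcon : (4 - p) * c < 2 * a)
    (φ : ℝ → ℝ) (hφ : ∀ t : ℝ, 0 < t → φ t = t ^ 2 * a + t ^ 4 * B - t ^ p * c)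
    (T : ℝ) (hT : T = (2 * a / ((4 - p) * c)) ^ (1 / (p - 2))) :
    1 < T ∧ ∃ s : ℝ, T < s ∧ φ s = 0 ∧
      (∀ t : ℝ, 0 < t → t ≤ 1 → 0 ≤ φ t) ∧
      (∀ t : ℝ, 1 ≤ t → t ≤ s → φ t ≤ 0) ∧
      (∀ t : ℝ, s ≤ t → 0 ≤ φ t) := by
  have hp2' : (0:ℝ) < p - 2 := by linarith
  have hp4' : (0:ℝ) < 4 - p := by linarith
  -- key inequality (4-p)B < (p-2)a
  have hab : (4 - p) * B < (p - 2) * a := by nlinarith [hcon, heq]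
  -- the auxiliary function G t = a t^(2-p) + B t^(4-p) - c
  set G : ℝ → ℝ := fun t => a * t ^ (2 - p) + B * t ^ (4 - p) - c with hGdef
  -- relation φ t = t^p * G t for t > 0
  have hphi : ∀ t : ℝ, 0 < t → φ t = t ^ p * G t := by
    intro t ht
    have e2 : t ^ p * t ^ (2 - p) = t ^ (2:ℕ) := by
      rw [← Real.rpow_add ht, show p + (2 - p) = ((2:ℕ):ℝ) by push_cast; ring,
        Real.rpow_natCast]
    have e4 : t ^ p * t ^ (4 - p) = t ^ (4:ℕ) := by
      rw [← Real.rpow_add ht, show p + (4 - p) = ((4:ℕ):ℝ) by push_cast; ring,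
        Real.rpow_natCast]
    rw [hφ t ht]
    simp only [hGdef]
    rw [mul_sub, mul_add, ← mul_assoc, ← mul_assoc, mul_comm (t ^ p) a,
      mul_comm (t ^ p) B, mul_assoc a, mul_assoc B, e2, e4]
    ring
  have hrpos : (0:ℝ) < (p - 2) * a / ((4 - p) * B) := by positivity
  -- the critical point t₀
  set t₀ : ℝ := Real.sqrt ((p - 2) * a / ((4 - p) * B)) with ht₀def
  have ht₀sq : t₀ ^ 2 = (p - 2) * a / ((4 - p) * B) := Real.sq_sqrt hrpos.le
  have ht₀1 : 1 < t₀ := by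
    rw [ht₀def, show (1:ℝ) = Real.sqrt 1 by rw [Real.sqrt_one]]
    exact Real.sqrt_lt_sqrt (by norm_num) ((one_lt_div (by positivity)).mpr hab)
  have ht₀pos : 0 < t₀ := lt_trans one_pos ht₀1
  have hKey : (4 - p) * B * t₀ ^ 2 = (p - 2) * a := by
    rw [ht₀sq]; field_simp
  -- derivative of G
  have hderiv : ∀ x : ℝ, 0 < x →
      HasDerivAt G (x ^ (1 - p) * ((2 - p) * a + (4 - p) * B * x ^ 2)) x := by
    intro x hx
    have h1 : HasDerivAt (fun y : ℝ => y ^ (2 - p)) ((2 - p) * x ^ (2 - p - 1)) x :=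
      Real.hasDerivAt_rpow_const (Or.inl hx.ne')
    have h2 : HasDerivAt (fun y : ℝ => y ^ (4 - p)) ((4 - p) * x ^ (4 - p - 1)) x :=
      Real.hasDerivAt_rpow_const (Or.inl hx.ne')
    have h3 := ((h1.const_mul a).add (h2.const_mul B)).sub_const c
    convert h3 using 1
    · rfl
    · rfl
    · rfl
    have e1 : x ^ (2 - p - 1) = x ^ (1 - p) := by congr 1; ring
    have e2 : x ^ (4 - p - 1) = x ^ (1 - p) * x ^ (2:ℕ) := by
      rw [← Real.rpow_natCast x 2, ← Real.rpow_add hx]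
      congr 1; push_cast; ring
    rw [e1, e2]; ring
  have hcont : ∀ x : ℝ, 0 < x → ContinuousAt G x := fun x hx =>
    (hderiv x hx).continuousAt
  -- G strictly decreasing on (0, t₀]
  have hanti : StrictAntiOn G (Set.Ioc 0 t₀) := by
    apply strictAntiOn_of_deriv_neg (convex_Ioc 0 t₀)
      (fun x hx => (hcont x hx.1).continuousWithinAt)
    intro x hx
    rw [interior_Ioc] at hx
    rw [(hderiv x hx.1).deriv]
    apply mul_neg_of_pos_of_neg (Real.rpow_pos_of_pos hx.1 _)
    have hx2 : x ^ 2 < t₀ ^ 2 := by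
      exact pow_lt_pow_left₀ hx.2 hx.1.le (by norm_num)
    have h1 : (4 - p) * B * x ^ 2 < (4 - p) * B * t₀ ^ 2 :=
      mul_lt_mul_of_pos_left hx2 (by positivity)
    linarith [hKey, h1]
  -- G strictly increasing on [t₀, ∞)
  have hmono : StrictMonoOn G (Set.Ici t₀) := by
    apply strictMonoOn_of_deriv_pos (convex_Ici t₀)
      (fun x hx => (hcont x (lt_of_lt_of_le ht₀pos hx)).continuousWithinAt)
    intro x hx
    rw [interior_Ici] at hx
    have hxpos : 0 < x := lt_trans ht₀pos hx
    rw [(hderiv x hxpos).deriv]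
    apply mul_pos (Real.rpow_pos_of_pos hxpos _)
    have hx2 : t₀ ^ 2 < x ^ 2 :=
      pow_lt_pow_left₀ (Set.mem_Ioi.mp hx) ht₀pos.le (by norm_num)
    have h1 : (4 - p) * B * t₀ ^ 2 < (4 - p) * B * x ^ 2 :=
      mul_lt_mul_of_pos_left hx2 (by positivity)
    linarith [hKey, h1]
  have hG1 : G 1 = 0 := by simp [hGdef, Real.one_rpow]; linarith
  have hGt₀ : G t₀ < 0 := by
    have := hanti (Set.mem_Ioc.mpr ⟨one_pos, ht₀1.le⟩)
      (Set.mem_Ioc.mpr ⟨ht₀pos, le_refl _⟩) ht₀1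
    rw [hG1] at this; exact this
  -- a large point where G is positive
  set M : ℝ := max (t₀ + 1) ((c / B) ^ (4 - p)⁻¹ + 1) with hMdef
  have hMt₀ : t₀ < M := lt_of_lt_of_le (by linarith) (le_max_left _ _)
  have hMpos : 0 < M := lt_trans ht₀pos hMt₀
  have hGM : 0 < G M := by
    have h1 : (c / B) ^ (4 - p)⁻¹ < M := lt_of_lt_of_le (by linarith)
      (le_max_right _ _)
    have h2 : ((c / B) ^ (4 - p)⁻¹) ^ (4 - p) < M ^ (4 - p) :=
      Real.rpow_lt_rpow (Real.rpow_nonneg (by positivity) _) h1 hp4'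
    rw [Real.rpow_inv_rpow (by positivity) hp4'.ne'] at h2
    have h3 : c < B * M ^ (4 - p) := by
      rw [div_lt_iff₀ hB] at h2; linarith [h2]
    have h4 : 0 < a * M ^ (2 - p) := by positivity
    simp only [hGdef]; linarith
  -- existence of the zero s by IVT
  have hIVT := intermediate_value_Ioo (le_of_lt hMt₀)
    (fun x hx => (hcont x (lt_of_lt_of_le ht₀pos hx.1)).continuousWithinAt)
  obtain ⟨s, hs, hGs⟩ := hIVT (Set.mem_Ioo.mpr ⟨hGt₀, hGM⟩)
  have hst₀ : t₀ < s := hs.1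
  have hs1 : 1 < s := lt_trans ht₀1 hst₀
  have hspos : 0 < s := lt_trans one_pos hs1
  -- T facts
  have hX1 : 1 < 2 * a / ((4 - p) * c) := (one_lt_div (by positivity)).mpr hcon
  have hT1 : 1 < T := by
    rw [hT]
    exact (Real.one_lt_rpow_iff_of_pos (by positivity)).mpr
      (Or.inl ⟨hX1, by positivity⟩)
  have hTpow : T ^ (p - 2) = 2 * a / ((4 - p) * c) := by
    rw [hT, one_div, Real.rpow_inv_rpow (by positivity) hp2'.ne']
  -- T < s
  have hTs : T < s := by
    -- from G s = 0 derive a + B s² = c s^(p-2)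
    have hGs' : a * s ^ (2 - p) + B * s ^ (4 - p) = c := by
      simp only [hGdef] at hGs; linarith
    have hmul : s ^ (p - 2) * (a * s ^ (2 - p) + B * s ^ (4 - p)) =
        s ^ (p - 2) * c := by rw [hGs']
    have e0 : s ^ (p - 2) * s ^ (2 - p) = 1 := by
      rw [← Real.rpow_add hspos]; norm_num
    have e2 : s ^ (p - 2) * s ^ (4 - p) = s ^ (2:ℕ) := by
      rw [← Real.rpow_add hspos, show p - 2 + (4 - p) = ((2:ℕ):ℝ) by push_cast; ring,
        Real.rpow_natCast]
    have hskey : a + B * s ^ 2 = c * s ^ (p - 2) := by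
      rw [mul_add, ← mul_assoc, ← mul_assoc, mul_comm (s ^ (p-2)) a,
        mul_comm (s ^ (p-2)) B, mul_assoc a, mul_assoc B, e0, e2,
        mul_comm (s ^ (p-2)) c] at hmul
      linarith [hmul]
    have hsq : t₀ ^ 2 < s ^ 2 := pow_lt_pow_left₀ hst₀ ht₀pos.le (by norm_num)
    have hpowlt : T ^ (p - 2) < s ^ (p - 2) := by
      rw [hTpow, div_lt_iff₀ (by positivity)]
      have h1 : (4 - p) * B * t₀ ^ 2 < (4 - p) * B * s ^ 2 :=
        mul_lt_mul_of_pos_left hsq (by positivity)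
      have h2 : (4 - p) * (a + B * s ^ 2) = (4 - p) * (c * s ^ (p - 2)) := by
        rw [hskey]
      nlinarith [hKey, h1, h2]
    by_contra h
    push_neg at h
    exact absurd (Real.rpow_le_rpow hspos.le h hp2'.le) (not_le.mpr hpowlt)
  refine ⟨hT1, s, hTs, ?_, ?_, ?_, ?_⟩
  · rw [hphi s hspos, hGs, mul_zero]
  · -- 0 < t ≤ 1 : φ t ≥ 0
    intro t ht ht1
    rw [hphi t ht]
    apply mul_nonneg (Real.rpow_pos_of_pos ht _).le
    have := (hanti.antitoneOn) (Set.mem_Ioc.mpr ⟨ht, le_trans ht1 ht₀1.le⟩)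
      (Set.mem_Ioc.mpr ⟨one_pos, ht₀1.le⟩) ht1
    rw [hG1] at this; exact this
  · -- 1 ≤ t ≤ s : φ t ≤ 0
    intro t h1t hts
    have htpos : 0 < t := lt_of_lt_of_le one_pos h1t
    rw [hphi t htpos]
    apply mul_nonpos_of_nonneg_of_nonpos (Real.rpow_pos_of_pos htpos _).le
    rcases le_total t t₀ with h | h
    · have := (hanti.antitoneOn) (Set.mem_Ioc.mpr ⟨one_pos, ht₀1.le⟩)
        (Set.mem_Ioc.mpr ⟨htpos, h⟩) h1t
      rw [hG1] at this; exact this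
    · have := (hmono.monotoneOn) (Set.mem_Ici.mpr h)
        (Set.mem_Ici.mpr hst₀.le) hts
      rw [hGs] at this; exact this
  · -- s ≤ t : φ t ≥ 0
    intro t hst
    have htpos : 0 < t := lt_of_lt_of_le hspos hst
    rw [hphi t htpos]
    apply mul_nonneg (Real.rpow_pos_of_pos htpos _).le
    have := (hmono.monotoneOn) (Set.mem_Ici.mpr hst₀.le)
      (Set.mem_Ici.mpr (le_trans hst₀.le hst)) hst
    rw [hGs] at this; exact this
end

section
/- Let $p$ be a real number with $2 < p < 4$ and let $b > 0$, $\alpha > 0$ be real numbers. Suppose $a > 0$, $c > 0$, $d \in [0, a]$, and $D \ge 0$ are real numbers satisfying $a + b d^2 + b d D = c$, $(4-p) c \ge 2 a$, and $d + D \le \frac{8 p \alpha}{p-2}$. Then $b \ge \frac{(p-2)^2}{8 p (4-p) \alpha}$. Equivalently, if $b < \frac{(p-2)^2}{8 p (4-p) \alpha}$, then any such data with the Nehari equality $a + b d^2 + b d D = c$ and the bound $d + D \le \frac{8p\alpha}{p-2}$ must satisfy the strict constraint $(4-p) c < 2 a$. -/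
/-- scalar content of claim (2.35) in Lemma 2.4. For `2 < p < 4`,
`b, α > 0`, and `a > 0`, `c > 0`, `d ∈ [0, a]`, `D ≥ 0` with the Nehari equality
`a + b d² + b d D = c`, the reversed constraint `(4-p) c ≥ 2 a`, and the bound
`d + D ≤ 8 p α/(p-2)`, one has `b ≥ (p-2)²/(8 p (4-p) α)`. -/
theorem stmt_13 (p b α a c d D : ℝ) (hp2 : 2 < p) (hp4 : p < 4)
    (hb : 0 < b) (hα : 0 < α) (ha : 0 < a) (hc : 0 < c)
    (hd : d ∈ Set.Icc 0 a) (hD : 0 ≤ D)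
    (heq : a + b * d ^ 2 + b * d * D = c)
    (hge : 2 * a ≤ (4 - p) * c)
    (hbound : d + D ≤ 8 * p * α / (p - 2)) :
    (p - 2) ^ 2 / (8 * p * (4 - p) * α) ≤ b := by
  obtain ⟨hd0, hda⟩ := hd
  have hp2' : (0:ℝ) < p - 2 := by linarith
  have hp4' : (0:ℝ) < 4 - p := by linarith
  have hbound' : (d + D) * (p - 2) ≤ 8 * p * α := (le_div_iff₀ hp2').mp hbound
  have hkey : (p - 2) * a ≤ (4 - p) * (b * d * (d + D)) := by nlinarith
  have hdenom : 0 < 8 * p * (4 - p) * α := by positivity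
  have h1 : (p - 2) * a ≤ (4 - p) * (b * a * (d + D)) := by
    nlinarith [mul_le_mul_of_nonneg_right hda (mul_nonneg (mul_nonneg hp4'.le hb.le) (add_nonneg hd0 hD))]
  have h2 : p - 2 ≤ (4 - p) * (b * (d + D)) := by
    have := (mul_le_mul_iff_of_pos_right ha).mp (by nlinarith : (p - 2) * a ≤ (4 - p) * (b * (d + D)) * a)
    linarith
  have h3 : (p - 2) * (p - 2) ≤ (4 - p) * b * (8 * p * α) := by
    nlinarith [mul_le_mul_of_nonneg_left hbound' (mul_nonneg hp4'.le hb.le)]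
  rw [div_le_iff₀ hdenom]
  nlinarith
end

section
/- Let $p$ be a real number with $2 < p < 4$, let $k \ge 0$ be an integer, and let $b \ge 0$. Suppose for each $i \in \{1, \dots, k+1\}$ we are given real numbers $a_i > 0$, $c_i > 0$, $d_i \ge 0$ satisfying $(4-p) c_i < 2 a_i$. Then for every tuple $(t_1, \dots, t_{k+1}) \in (0, 1]^{k+1}$ one has $\sum_{i}\left(\frac{t_i^2}{4} a_i - \frac{4-p}{4p} t_i^p c_i\right) \le \frac{1}{4}\sum_{i} t_i^2\left(a_i + b d_i \sum_{j \ne i} t_j^2 d_j\right) - \frac{4-p}{4p}\sum_{i} t_i^p c_i \le \frac{1}{4}\sum_{i}\left(a_i + b d_i \sum_{j \ne i} d_j\right) - \frac{4-p}{4p}\sum_{i} c_i$. -/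
/-- the central summation estimate in the proof of
`I_b(u_k) > (k+1) I_b(u_0)` in Theorem 1.2. For `2 < p < 4`, `b ≥ 0`, data
`aᵢ > 0`, `cᵢ > 0`, `dᵢ ≥ 0` with `(4-p) cᵢ < 2 aᵢ`, and every tuple
`(t₁,…,t_{k+1}) ∈ (0,1]^{k+1}`:
`∑ᵢ (tᵢ²/4 aᵢ - ((4-p)/(4p)) tᵢ^p cᵢ)
  ≤ ¼ ∑ᵢ tᵢ² (aᵢ + b dᵢ ∑_{j≠i} tⱼ² dⱼ) - ((4-p)/(4p)) ∑ᵢ tᵢ^p cᵢ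
  ≤ ¼ ∑ᵢ (aᵢ + b dᵢ ∑_{j≠i} dⱼ) - ((4-p)/(4p)) ∑ᵢ cᵢ`. -/
theorem stmt_14 (p : ℝ) (hp2 : 2 < p) (hp4 : p < 4) (k : ℕ) (b : ℝ) (hb : 0 ≤ b)
    (a c d : Fin (k + 1) → ℝ)
    (ha : ∀ i, 0 < a i) (hc : ∀ i, 0 < c i) (hd : ∀ i, 0 ≤ d i)
    (hcon : ∀ i, (4 - p) * c i < 2 * a i)
    (t : Fin (k + 1) → ℝ) (ht : ∀ i, t i ∈ Set.Ioc (0 : ℝ) 1) :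
    (∑ i, (t i ^ 2 / 4 * a i - (4 - p) / (4 * p) * (t i ^ p * c i))) ≤
        (1 / 4) * (∑ i, t i ^ 2 *
            (a i + b * d i * (∑ j ∈ Finset.univ.erase i, t j ^ 2 * d j))) -
          (4 - p) / (4 * p) * (∑ i, t i ^ p * c i) ∧
      (1 / 4) * (∑ i, t i ^ 2 *
            (a i + b * d i * (∑ j ∈ Finset.univ.erase i, t j ^ 2 * d j))) -
          (4 - p) / (4 * p) * (∑ i, t i ^ p * c i) ≤
        (1 / 4) * (∑ i, (a i + b * d i * (∑ j ∈ Finset.univ.erase i, d j))) -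
          (4 - p) / (4 * p) * (∑ i, c i) := by

  have hK : 0 < (4 - p) / (4 * p) := by
    apply div_pos <;> linarith
  have key : ∀ i : Fin (k+1), t i ^ 2 / 4 * a i - (4 - p) / (4 * p) * (t i ^ p * c i)
      ≤ 1 / 4 * a i - (4 - p) / (4 * p) * c i := by
    intro i
    obtain ⟨ht0, ht1⟩ := ht i
    have hB : 1 + (p / 2) * (t i ^ 2 - 1) ≤ (1 + (t i ^ 2 - 1)) ^ (p / 2) :=
      one_add_mul_self_le_rpow_one_add (by nlinarith) (by linarith)
    have hr : (1 + (t i ^ 2 - 1)) ^ (p / 2) = t i ^ p := by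
      have : (1 : ℝ) + (t i ^ 2 - 1) = t i ^ (2 : ℝ) := by
        rw [Real.rpow_two]; ring
      rw [this, ← Real.rpow_natCast (t i) 2] at *
      rw [← Real.rpow_mul ht0.le]
      congr 1
      ring
    rw [hr] at hB
    -- hB : 1 + (p/2)*(t²-1) ≤ t^p, i.e. 1 - t^p ≤ (p/2)(1-t²)
    have h1 : 1 - t i ^ p ≤ (p / 2) * (1 - t i ^ 2) := by nlinarith
    have hcc := hc i
    have haa := ha i
    have hco := hcon i
    have ht2 : t i ^ 2 ≤ 1 := by nlinarith
    have e : (4 - p) / (4 * p) * c i - (4 - p) / (4 * p) * (t i ^ p * c i)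
        = (4 - p) / (4 * p) * ((1 - t i ^ p) * c i) := by ring
    have h2 : (4 - p) / (4 * p) * ((1 - t i ^ p) * c i)
        ≤ (4 - p) / (4 * p) * ((p / 2) * (1 - t i ^ 2) * c i) := by
      apply mul_le_mul_of_nonneg_left _ hK.le
      have : (1 - t i ^ p) * c i ≤ (p / 2) * (1 - t i ^ 2) * c i := by
        apply mul_le_mul_of_nonneg_right h1 hcc.le
      linarith
    have h3 : (4 - p) / (4 * p) * ((p / 2) * (1 - t i ^ 2) * c i)
        = (4 - p) * c i * (1 - t i ^ 2) / 8 := by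
      field_simp; ring
    nlinarith [mul_le_mul_of_nonneg_right hco.le (show (0:ℝ) ≤ 1 - t i ^ 2 by linarith)]
  have hSnn : ∀ i : Fin (k+1), 0 ≤ b * d i * (∑ j ∈ Finset.univ.erase i, t j ^ 2 * d j) := by
    intro i
    apply mul_nonneg (mul_nonneg hb (hd i))
    apply Finset.sum_nonneg
    intro j _
    exact mul_nonneg (sq_nonneg _) (hd j)
  constructor
  · rw [Finset.sum_sub_distrib]
    apply sub_le_sub
    · rw [Finset.mul_sum]
      apply Finset.sum_le_sum
      intro i _
      have h := hSnn i
      have ht2 : 0 ≤ t i ^ 2 := sq_nonneg _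
      nlinarith
    · rw [Finset.mul_sum]
  · rw [Finset.mul_sum, Finset.mul_sum, Finset.mul_sum, Finset.mul_sum,
      ← Finset.sum_sub_distrib, ← Finset.sum_sub_distrib]
    apply Finset.sum_le_sum
    intro i _
    obtain ⟨ht0, ht1⟩ := ht i
    have ht2 : t i ^ 2 ≤ 1 := by nlinarith
    have hS : t i ^ 2 * (b * d i * (∑ j ∈ Finset.univ.erase i, t j ^ 2 * d j))
        ≤ b * d i * (∑ j ∈ Finset.univ.erase i, d j) := by
      have hs1 : (∑ j ∈ Finset.univ.erase i, t j ^ 2 * d j)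
          ≤ (∑ j ∈ Finset.univ.erase i, d j) := by
        apply Finset.sum_le_sum
        intro j _
        obtain ⟨hj0, hj1⟩ := ht j
        have hj2 : t j ^ 2 ≤ 1 := by nlinarith
        nlinarith [hd j]
      have h0 := hSnn i
      have hbd : 0 ≤ b * d i := mul_nonneg hb (hd i)
      calc t i ^ 2 * (b * d i * (∑ j ∈ Finset.univ.erase i, t j ^ 2 * d j))
          ≤ 1 * (b * d i * (∑ j ∈ Finset.univ.erase i, t j ^ 2 * d j)) := by
            apply mul_le_mul_of_nonneg_right ht2 h0
        _ = b * d i * (∑ j ∈ Finset.univ.erase i, t j ^ 2 * d j) := one_mul _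
        _ ≤ b * d i * (∑ j ∈ Finset.univ.erase i, d j) :=
            mul_le_mul_of_nonneg_left hs1 hbd
    have hk := key i
    nlinarith
end
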